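/- arXiv:1802.08991 — 6 statements merged into one kernel-verified Lean document; each statement's English description precedes it below -/
import Mathlib

section
/- Let f, g : D∖{0} → ℝ be smooth functions such that γ = f dx + g dy is a harmonic 1-form on the punctured unit disk with respect to the standard complex structure, i.e. the function F := f + ig is holomorphic on D∖{0}, and assume that γ has finite L²-norm: ∫_{D∖{0}} (f² + g²) dA < ∞. Then γ extends across the puncture: there exist functions f̃, g̃ : D → ℝ with f̃ + ig̃ holomorphic on D and f̃ = f, g̃ = g on D∖{0}. -/
open MeasureTheory

section Aux
open Metric Complex Set

lemma circle_mean (G : ℂ → ℂ) (z : ℂ) (s : ℝ) (hs : 0 < s)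
    (hc : ContinuousOn G (closedBall z s))
    (hd : ∀ x ∈ ball z s, DifferentiableAt ℂ G x) :
    2 * Real.pi * ‖G z‖ ≤ ∫ θ in (0:ℝ)..(2*Real.pi), ‖G (circleMap z s θ)‖ := by
  have key := Complex.two_pi_I_inv_smul_circleIntegral_sub_inv_smul_of_differentiable_on_off_countable
    (s := (∅ : Set ℂ)) Set.countable_empty (Metric.mem_ball_self hs) hc
    (fun x hx => hd x hx.1)
  rw [circleIntegral] at key
  have h1 : ∀ θ : ℝ, (deriv (circleMap z s) θ) • ((circleMap z s θ - z)⁻¹ • G (circleMap z s θ))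
      = I • G (circleMap z s θ) := by
    intro θ
    rw [deriv_circleMap, circleMap_sub_center, smul_smul]
    have hne : circleMap 0 s θ ≠ 0 := circleMap_ne_center hs.ne'
    rw [mul_comm (circleMap 0 s θ) I, mul_assoc, mul_inv_cancel₀ hne, mul_one]
  simp only [h1] at key
  rw [intervalIntegral.integral_smul, smul_smul] at key
  have h2 : ((2 * Real.pi * I : ℂ))⁻¹ * I = ((2 * Real.pi : ℝ) : ℂ)⁻¹ := by
    rw [mul_inv, mul_assoc, inv_mul_cancel₀ I_ne_zero, mul_one]
    push_cast
    rw [mul_inv]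
  rw [h2] at key
  have h3 : ‖G z‖ ≤ (2*Real.pi)⁻¹ * ‖∫ θ in (0:ℝ)..(2*Real.pi), G (circleMap z s θ)‖ := by
    rw [← key, norm_smul]
    simp [_root_.abs_of_nonneg Real.pi_pos.le, mul_inv]
  have h4 : ‖∫ θ in (0:ℝ)..(2*Real.pi), G (circleMap z s θ)‖
      ≤ ∫ θ in (0:ℝ)..(2*Real.pi), ‖G (circleMap z s θ)‖ :=
    intervalIntegral.norm_integral_le_integral_norm (by positivity)
  have hpi : (0:ℝ) < 2 * Real.pi := by positivity
  have h5 := mul_le_mul_of_nonneg_left h3 hpi.le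
  rw [← mul_assoc, mul_inv_cancel₀ hpi.ne', one_mul] at h5
  linarith

lemma area_mean (G : ℂ → ℂ) (z : ℂ) (r : ℝ) (hr : 0 < r)
    (hc : ContinuousOn G (closedBall z r))
    (hd : ∀ x ∈ ball z r, DifferentiableAt ℂ G x) :
    Real.pi * r^2 * ‖G z‖ ≤ ∫ w in ball z r, ‖G w‖ := by
  set q : ℝ × ℝ → ℝ := fun p => p.1 * ‖G (z + Complex.polarCoord.symm p)‖ with hq
  have hσ : Continuous (fun p : ℝ × ℝ => Complex.polarCoord.symm p) := by
    simp only [Complex.polarCoord_symm_apply]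
    fun_prop
  have hrect : MeasurableSet (Ioo (0:ℝ) r ×ˢ Ioo (-Real.pi) Real.pi) := by measurability
  have hqc : ContinuousOn q (Icc 0 r ×ˢ Icc (-Real.pi) Real.pi) := by
    apply ContinuousOn.mul continuous_fst.continuousOn
    apply ContinuousOn.norm
    apply hc.comp ((continuous_const.add hσ).continuousOn)
    intro p hp
    simp only [mem_closedBall, Pi.add_apply, dist_self_add_left]
    rw [show ‖Complex.polarCoord.symm p‖ = |p.1| from Complex.norm_polarCoord_symm p]
    rw [_root_.abs_of_nonneg hp.1.1]
    exact hp.1.2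
  have hqi : IntegrableOn q (Ioo 0 r ×ˢ Ioo (-Real.pi) Real.pi) (volume.prod volume) := by
    rw [← Measure.volume_eq_prod]
    apply (hqc.integrableOn_compact (isCompact_Icc.prod isCompact_Icc)).mono_set
    exact Set.prod_mono Ioo_subset_Icc_self Ioo_subset_Icc_self
  have hpolar := Complex.integral_comp_polarCoord_symm
    (fun w => Set.indicator (ball (0:ℂ) r) (fun u => ‖G (z+u)‖) w)
  have hRHS : (∫ w : ℂ, Set.indicator (ball (0:ℂ) r) (fun u => ‖G (z+u)‖) w)
      = ∫ w in ball z r, ‖G w‖ := by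
    rw [integral_indicator measurableSet_ball]
    have := (measurePreserving_add_left (volume : Measure ℂ) z).setIntegral_preimage_emb
      (MeasurableEquiv.addLeft z).measurableEmbedding (fun w => ‖G w‖) (ball z r)
    rw [← this]
    congr 1
    ext u
    simp [Complex.dist_eq]
  have hLHS : (∫ p in polarCoord.target,
        p.1 • Set.indicator (ball (0:ℂ) r) (fun u => ‖G (z+u)‖) (Complex.polarCoord.symm p))
      = ∫ p in Ioo 0 r ×ˢ Ioo (-Real.pi) Real.pi, q p := by
    have hsub : (Ioo (0:ℝ) r ×ˢ Ioo (-Real.pi) Real.pi) ⊆ polarCoord.target :=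
      Set.prod_mono Ioo_subset_Ioi_self subset_rfl
    have h1 : (∫ p in Ioo (0:ℝ) r ×ˢ Ioo (-Real.pi) Real.pi, q p)
        = ∫ p in polarCoord.target, (Ioo (0:ℝ) r ×ˢ Ioo (-Real.pi) Real.pi).indicator q p := by
      rw [setIntegral_indicator hrect, Set.inter_eq_right.2 hsub]
    rw [h1]
    apply setIntegral_congr_fun polarCoord.open_target.measurableSet
    intro p hp
    have hp1 : (0:ℝ) < p.1 := hp.1
    have habs : ‖Complex.polarCoord.symm p‖ = p.1 := by
      rw [Complex.norm_polarCoord_symm, _root_.abs_of_nonneg hp1.le]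
    by_cases hlt : p.1 < r
    · have hmem : Complex.polarCoord.symm p ∈ ball (0:ℂ) r := by
        simp only [mem_ball, dist_zero_right]
        rw [show ‖Complex.polarCoord.symm p‖ = ‖Complex.polarCoord.symm p‖ from rfl, habs]
        exact hlt
      have hmem2 : p ∈ Ioo (0:ℝ) r ×ˢ Ioo (-Real.pi) Real.pi := ⟨⟨hp1, hlt⟩, hp.2⟩
      simp only [Set.indicator_of_mem hmem, Set.indicator_of_mem hmem2, smul_eq_mul, hq]
    · have hmem : Complex.polarCoord.symm p ∉ ball (0:ℂ) r := by
        simp only [mem_ball, dist_zero_right]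
        rw [show ‖Complex.polarCoord.symm p‖ = ‖Complex.polarCoord.symm p‖ from rfl, habs]
        exact fun h => hlt h
      have hmem2 : p ∉ Ioo (0:ℝ) r ×ˢ Ioo (-Real.pi) Real.pi := fun h => hlt h.1.2
      simp only [Set.indicator_of_notMem hmem, Set.indicator_of_notMem hmem2, smul_zero]
  -- Fubini
  have hfub : (∫ p in Ioo 0 r ×ˢ Ioo (-Real.pi) Real.pi, q p)
      = ∫ s in Ioo (0:ℝ) r, ∫ θ in Ioo (-Real.pi) Real.pi, q (s, θ) := by
    rw [show (volume : Measure (ℝ × ℝ)) = volume.prod volume from Measure.volume_eq_prod ℝ ℝ]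
    exact setIntegral_prod q hqi
  -- inner bound
  have hinner : ∀ s ∈ Ioo (0:ℝ) r,
      2 * Real.pi * ‖G z‖ * s ≤ ∫ θ in Ioo (-Real.pi) Real.pi, q (s, θ) := by
    intro s hs
    have hcm : ∀ θ : ℝ, z + Complex.polarCoord.symm (s, θ) = circleMap z s θ := by
      intro θ
      rw [Complex.polarCoord_symm_apply, circleMap]
      simp [Complex.exp_mul_I]
    have hball : closedBall z s ⊆ closedBall z r := closedBall_subset_closedBall hs.2.le
    have key := circle_mean G z s hs.1 (hc.mono hball)
      (fun x hx => hd x (ball_subset_ball hs.2.le hx))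
    -- periodic shift from (0, 2π) to (-π, π)
    have hper : Function.Periodic (fun θ => ‖G (circleMap z s θ)‖) (2*Real.pi) := by
      intro θ
      simp [periodic_circleMap z s θ]
    have hshift := hper.intervalIntegral_add_eq (-Real.pi) 0
    rw [show -Real.pi + 2*Real.pi = Real.pi by ring, show (0:ℝ) + 2*Real.pi = 2*Real.pi by ring]
      at hshift
    rw [← hshift] at key
    have hioo : (∫ θ in Ioo (-Real.pi) Real.pi, q (s, θ))
        = s * ∫ θ in (-Real.pi)..Real.pi, ‖G (circleMap z s θ)‖ := by
      rw [intervalIntegral.integral_of_le (by linarith [Real.pi_pos]),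
        integral_Ioc_eq_integral_Ioo, ← integral_const_mul]
      apply setIntegral_congr_fun measurableSet_Ioo
      intro θ _
      simp only [hq]
      rw [hcm θ]
    rw [hioo]
    calc 2 * Real.pi * ‖G z‖ * s = s * (2 * Real.pi * ‖G z‖) := by ring
    _ ≤ s * ∫ θ in (-Real.pi)..Real.pi, ‖G (circleMap z s θ)‖ :=
        mul_le_mul_of_nonneg_left key hs.1.le
  -- outer integration
  have houter : Real.pi * r^2 * ‖G z‖ ≤ ∫ s in Ioo (0:ℝ) r, ∫ θ in Ioo (-Real.pi) Real.pi, q (s, θ) := by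
    have hint1 : IntegrableOn (fun s : ℝ => 2 * Real.pi * ‖G z‖ * s) (Ioo 0 r) := by
      exact ((continuous_const.mul continuous_id).integrableOn_Icc).mono_set Ioo_subset_Icc_self
    have hint2 : IntegrableOn (fun s : ℝ => ∫ θ in Ioo (-Real.pi) Real.pi, q (s, θ)) (Ioo 0 r) := by
      have := hqi
      rw [IntegrableOn, ← Measure.prod_restrict] at this
      exact this.integral_prod_left
    have hIle := setIntegral_mono_on hint1 hint2 measurableSet_Ioo hinner
    have hval : (∫ s in Ioo (0:ℝ) r, 2 * Real.pi * ‖G z‖ * s) = Real.pi * r^2 * ‖G z‖ := by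
      rw [integral_const_mul, ← integral_Ioc_eq_integral_Ioo,
        ← intervalIntegral.integral_of_le hr.le, integral_id]
      ring
    linarith
  rw [← hRHS, ← hpolar, hLHS, hfub]
  exact houter

end Aux

section Main
open Metric Complex Set

/-- A harmonic 1-form `γ = f dx + g dy` on the punctured unit disk
(i.e. `F = f + i g` is holomorphic there) with finite `L²`-norm extends across the
puncture. -/
theorem harmonic_one_form_extends_across_puncture
    (f g : ℂ → ℝ)
    (hf : ContDiffOn ℝ (⊤ : ℕ∞) f (Metric.ball (0 : ℂ) 1 \ {0}))
    (hg : ContDiffOn ℝ (⊤ : ℕ∞) g (Metric.ball (0 : ℂ) 1 \ {0}))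
    (hhol : ∀ z ∈ Metric.ball (0 : ℂ) 1 \ {0},
      DifferentiableAt ℂ (fun w => (f w : ℂ) + (g w : ℂ) * Complex.I) z)
    (hL2 : (∫⁻ z in Metric.ball (0 : ℂ) 1 \ {0},
        ENNReal.ofReal ((f z) ^ 2 + (g z) ^ 2)) < ⊤) :
    ∃ f' g' : ℂ → ℝ,
      (∀ z ∈ Metric.ball (0 : ℂ) 1,
        DifferentiableAt ℂ (fun w => (f' w : ℂ) + (g' w : ℂ) * Complex.I) z) ∧
      (∀ z ∈ Metric.ball (0 : ℂ) 1 \ {0}, f' z = f z ∧ g' z = g z) := by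
  set D' : Set ℂ := Metric.ball (0 : ℂ) 1 \ {0} with hD'
  set F : ℂ → ℂ := fun w => (f w : ℂ) + (g w : ℂ) * Complex.I with hF
  have hFc : ContinuousOn F D' :=
    (Complex.continuous_ofReal.comp_continuousOn hf.continuousOn).add
      ((Complex.continuous_ofReal.comp_continuousOn hg.continuousOn).mul continuousOn_const)
  have hmeasD : MeasurableSet D' := measurableSet_ball.diff (measurableSet_singleton 0)
  have hnorm : ∀ w, ‖F w‖^2 = f w ^ 2 + g w ^ 2 := by
    intro w
    rw [hF, Complex.sq_norm, Complex.normSq_add_mul_I]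
  have hInt : IntegrableOn (fun w => ‖F w‖^2) D' := by
    constructor
    · exact ((hFc.norm).pow 2).aestronglyMeasurable hmeasD
    · rw [hasFiniteIntegral_iff_ofReal (Filter.Eventually.of_forall fun w => by positivity)]
      simp only [hnorm]
      exact hL2
  -- decay of the integral on small balls
  have decay : ∀ ε > (0:ℝ), ∃ n : ℕ,
      (∫ w in ball (0:ℂ) (1/(n+1)) \ {0}, ‖F w‖^2) < ε := by
    intro ε hε
    set s : ℕ → Set ℂ := fun n => ball (0:ℂ) (1/(n+1)) \ {0} with hs
    have hsm : ∀ n, MeasurableSet (s n) :=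
      fun n => measurableSet_ball.diff (measurableSet_singleton 0)
    have hanti : Antitone s := by
      intro n m hnm
      apply Set.diff_subset_diff_left
      apply ball_subset_ball
      have : (0:ℝ) < n + 1 := by positivity
      apply one_div_le_one_div_of_le this
      have : (n:ℝ) ≤ m := Nat.cast_le.2 hnm
      linarith
    have hs0 : s 0 = D' := by norm_num [hs, hD']
    have htends := tendsto_setIntegral_of_antitone (f := fun w => ‖F w‖^2)
      (μ := volume) hsm hanti ⟨0, by rw [hs0]; exact hInt⟩
    have hiInter : ⋂ n, s n = ∅ := by
      rw [Set.eq_empty_iff_forall_notMem]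
      intro w hw
      have h0 : w ≠ 0 := (Set.mem_iInter.1 hw 0).2
      have hlt : ∀ n : ℕ, ‖w‖ < 1/(n+1) := by
        intro n
        have := (Set.mem_iInter.1 hw n).1
        simpa [dist_zero_right] using this
      have hle : ‖w‖ ≤ 0 := by
        have h2 : Filter.Tendsto (fun n : ℕ => 1/((n:ℝ)+1)) Filter.atTop (nhds 0) :=
          tendsto_one_div_add_atTop_nhds_zero_nat
        exact ge_of_tendsto h2 (Filter.Eventually.of_forall fun n => (hlt n).le)
      exact h0 (norm_eq_zero.1 (le_antisymm hle (norm_nonneg w)))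
    rw [hiInter] at htends
    simp only [Measure.restrict_empty, integral_zero_measure] at htends
    exact (htends.eventually (gt_mem_nhds hε)).exists
  -- monotonicity
  have hmono : ∀ t₁ t₂ : ℝ, t₁ ≤ t₂ → t₂ ≤ 1 →
      (∫ w in ball (0:ℂ) t₁ \ {0}, ‖F w‖^2) ≤ ∫ w in ball (0:ℂ) t₂ \ {0}, ‖F w‖^2 := by
    intro t₁ t₂ h12 h21
    apply setIntegral_mono_set
    · exact hInt.mono_set (Set.diff_subset_diff_left (ball_subset_ball h21))
    · exact Filter.Eventually.of_forall fun w => by positivity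
    · exact Filter.Eventually.of_forall fun w hw =>
        ⟨ball_subset_ball h12 hw.1, hw.2⟩
  -- key pointwise estimate
  have key : ∀ z : ℂ, z ≠ 0 → ‖z‖ < 2/3 →
      Real.pi * (‖z‖/2)^2 * ‖F z‖^2 ≤ ∫ w in ball (0:ℂ) (3*‖z‖/2) \ {0}, ‖F w‖^2 := by
    intro z hz hz3
    have hzpos : 0 < ‖z‖ := norm_pos_iff.2 hz
    have hz2 : 0 < ‖z‖/2 := by linarith
    have hsub1 : closedBall z (‖z‖/2) ⊆ D' := by
      intro w hw
      rw [mem_closedBall, dist_eq_norm] at hw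
      constructor
      · rw [mem_ball, dist_zero_right]
        calc ‖w‖ = ‖z + (w - z)‖ := by ring_nf
        _ ≤ ‖z‖ + ‖w - z‖ := norm_add_le _ _
        _ ≤ ‖z‖ + ‖z‖/2 := by linarith
        _ < 1 := by linarith
      · simp only [Set.mem_singleton_iff]
        intro h0
        rw [h0, zero_sub, norm_neg] at hw
        linarith
    have harea := area_mean (fun w => (F w)^2) z (‖z‖/2) hz2
      ((hFc.mono hsub1).pow 2)
      (fun x hx => ((hhol x (hsub1 (ball_subset_closedBall hx))).pow 2))
    simp only [norm_pow] at harea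
    refine le_trans harea (setIntegral_mono_set ?_ ?_ ?_)
    · apply hInt.mono_set
      apply Set.diff_subset_diff_left
      apply ball_subset_ball
      linarith
    · exact Filter.Eventually.of_forall fun w => by positivity
    · apply Filter.Eventually.of_forall
      intro w hw
      have hw : w ∈ ball z (‖z‖/2) := hw
      rw [mem_ball, dist_eq_norm] at hw
      have h1 : ‖w‖ < 3*‖z‖/2 := by
        calc ‖w‖ = ‖z + (w - z)‖ := by ring_nf
        _ ≤ ‖z‖ + ‖w - z‖ := norm_add_le _ _
        _ < 3*‖z‖/2 := by linarith
      refine ⟨by rwa [mem_ball, dist_zero_right], ?_⟩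
      simp only [Set.mem_singleton_iff]
      intro h0
      rw [h0, zero_sub, norm_neg] at hw
      linarith
  -- the tendsto
  have T : Filter.Tendsto (fun z => z * F z) (nhdsWithin 0 {(0:ℂ)}ᶜ) (nhds 0) := by
    rw [Metric.tendsto_nhdsWithin_nhds]
    intro ε hε
    have hε' : 0 < Real.pi * ε^2/8 := by positivity
    obtain ⟨n, hn⟩ := decay _ hε'
    refine ⟨min (2/(3*(n+1))) (1/2), by positivity, ?_⟩
    intro z hz hdist
    rw [dist_zero_right] at hdist
    have hzne : z ≠ 0 := hz
    have hzpos : 0 < ‖z‖ := norm_pos_iff.2 hzne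
    have hz12 : ‖z‖ < 1/2 := lt_of_lt_of_le hdist (min_le_right _ _)
    have hz23 : ‖z‖ < 2/(3*(n+1)) := lt_of_lt_of_le hdist (min_le_left _ _)
    have hk := key z hzne (by linarith)
    have hm : (∫ w in ball (0:ℂ) (3*‖z‖/2) \ {0}, ‖F w‖^2)
        ≤ ∫ w in ball (0:ℂ) (1/(n+1)) \ {0}, ‖F w‖^2 := by
      have hn1 : (0:ℝ) < (n:ℝ) + 1 := by positivity
      have h2 : ‖z‖ * (3*((n:ℝ)+1)) < 2 := by
        rwa [lt_div_iff₀ (by positivity)] at hz23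
      apply hmono
      · rw [show (3:ℝ)*‖z‖/2 = 3*‖z‖/2 from rfl, div_le_div_iff₀ (by norm_num : (0:ℝ)<2) hn1]
        nlinarith
      · rw [div_le_one hn1]
        nlinarith
    have hfinal : Real.pi * (‖z‖/2)^2 * ‖F z‖^2 < Real.pi * ε^2/8 := lt_of_le_of_lt (hk.trans hm) hn
    rw [dist_zero_right, norm_mul]
    have hsq : (‖z‖ * ‖F z‖)^2 < ε^2 := by nlinarith [Real.pi_pos, norm_nonneg (F z)]
    have h0 : 0 ≤ ‖z‖ * ‖F z‖ := by positivity
    nlinarith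
  -- isLittleO
  have ho : (fun w => F w - F 0) =o[nhdsWithin 0 {(0:ℂ)}ᶜ] fun w => (w - 0)⁻¹ := by
    have T2 : Filter.Tendsto (fun z => z * (F z - F 0)) (nhdsWithin 0 {(0:ℂ)}ᶜ) (nhds 0) := by
      have heq : (fun z : ℂ => z * (F z - F 0)) = fun z => z * F z - z * F 0 := by
        funext z; ring
      rw [heq]
      have T3 : Filter.Tendsto (fun z : ℂ => z * F 0) (nhdsWithin 0 {(0:ℂ)}ᶜ) (nhds 0) := by
        have := ((continuous_id.mul (continuous_const (y := F 0))).tendsto 0).mono_left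
          (nhdsWithin_le_nhds (s := {(0:ℂ)}ᶜ))
        simpa [Pi.mul_def] using this
      simpa using T.sub T3
    rw [Asymptotics.isLittleO_iff]
    intro c hc
    have h1 : ∀ᶠ z in nhdsWithin 0 {(0:ℂ)}ᶜ, ‖z * (F z - F 0)‖ < c := by
      have := Metric.tendsto_nhds.mp T2 c hc
      simpa [dist_zero_right] using this
    filter_upwards [h1, self_mem_nhdsWithin] with z h1z hzmem
    have hzne : z ≠ 0 := hzmem
    have hzpos : 0 < ‖z‖ := norm_pos_iff.2 hzne
    rw [sub_zero, norm_inv]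
    have heq : ‖F z - F 0‖ = ‖z‖⁻¹ * ‖z * (F z - F 0)‖ := by
      rw [norm_mul, ← mul_assoc, inv_mul_cancel₀ hzpos.ne', one_mul]
    rw [heq]
    calc ‖z‖⁻¹ * ‖z * (F z - F 0)‖ ≤ ‖z‖⁻¹ * c :=
      mul_le_mul_of_nonneg_left h1z.le (by positivity)
    _ = c * ‖z‖⁻¹ := mul_comm _ _
  -- removable singularity
  have hD'mem : D' ∈ nhdsWithin (0:ℂ) {(0:ℂ)}ᶜ := by
    apply mem_nhdsWithin.2
    exact ⟨ball 0 1, isOpen_ball, mem_ball_self one_pos, fun x hx => ⟨hx.1, hx.2⟩⟩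
  have hdiff := Complex.differentiableOn_update_limUnder_insert_of_isLittleO hD'mem
    (fun x hx => (hhol x hx).differentiableWithinAt) ho
  set F' : ℂ → ℂ := Function.update F 0 (Filter.limUnder (nhdsWithin 0 {(0:ℂ)}ᶜ) F) with hF'
  have hball : ball (0:ℂ) 1 ⊆ insert 0 D' := by
    intro x hx
    by_cases hx0 : x = 0
    · exact hx0 ▸ Set.mem_insert _ _
    · exact Set.mem_insert_of_mem _ ⟨hx, hx0⟩
  have hF'diff : ∀ z ∈ ball (0:ℂ) 1, DifferentiableAt ℂ F' z := fun z hz =>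
    (hdiff.mono hball).differentiableAt (isOpen_ball.mem_nhds hz)
  refine ⟨fun w => (F' w).re, fun w => (F' w).im, ?_, ?_⟩
  · intro z hz
    have heq : (fun w => (((F' w).re : ℂ)) + (((F' w).im : ℂ)) * Complex.I) = F' := by
      funext w; exact Complex.re_add_im _
    rw [heq]
    exact hF'diff z hz
  · intro z hz
    have hne : z ≠ 0 := hz.2
    have hFz : F' z = F z := Function.update_of_ne hne _ _
    show (F' z).re = f z ∧ (F' z).im = g z
    rw [hFz]
    constructor <;> simp [hF]

end Main
end

section
/- Let F : ℂ → ℂ be holomorphic on the punctured open unit disk D∖{0} and suppose that ∫_{D∖{0}} |F|² dA < ∞. Then for every natural number n ≥ 0 and every ρ ∈ (0,1) one has ∮_{|z|=ρ} zⁿ F(z) dz = 0; that is, all Laurent coefficients of F of negative index vanish. -/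
/-!
For `s ∈ (0, 1)` the integral `I = ∮_{|z|=s} zⁿ F(z) dz` does not depend on `s` (Cauchy's theorem
on annuli), and Cauchy–Schwarz on the circle gives `|I|² ≤ 2π s^{2n+2} ∫ |F(s e^{iθ})|² dθ`.
Dividing by `2π s^{2n+1}` and integrating over `s ∈ (0, 1)` in polar coordinates yields
`|I|²/(2π) · ∫₀¹ s^{-2n-1} ds ≤ ∫_{D∖{0}} |F|² < ∞`. Since `s^{-2n-1}` is not integrable at `0`,
`I = 0`.
-/

open MeasureTheory Metric Set Real
open scoped ENNReal

theorem sq_integral_le_measureReal_univ_mul_integral_sq {α : Type*} [MeasurableSpace α]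
    {μ : Measure α} [IsFiniteMeasure μ] {f : α → ℝ} (hf : Integrable f μ)
    (hf2 : Integrable (fun x ↦ f x ^ 2) μ) :
    (∫ x, f x ∂μ) ^ 2 ≤ μ.real univ * ∫ x, f x ^ 2 ∂μ := by
  set A := ∫ x, f x ∂μ
  set V := μ.real univ
  have expand : ∫ x, (V * f x - A) ^ 2 ∂μ = V * (V * ∫ x, f x ^ 2 ∂μ - A ^ 2) := by
    have hpt : ∀ x, (V * f x - A) ^ 2 = V ^ 2 * f x ^ 2 - 2 * V * A * f x + A ^ 2 :=
      fun x ↦ by ring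
    have hquad : Integrable (fun x ↦ V ^ 2 * f x ^ 2) μ := hf2.const_mul _
    have hlin : Integrable (fun x ↦ 2 * V * A * f x) μ := hf.const_mul _
    have hdiff : Integrable (fun x ↦ V ^ 2 * f x ^ 2 - 2 * V * A * f x) μ := hquad.sub hlin
    simp_rw [hpt]
    rw [integral_add hdiff (integrable_const _), integral_sub hquad hlin, integral_const_mul,
      integral_const_mul, integral_const, smul_eq_mul]
    ring
  have hnonneg : 0 ≤ V * (V * ∫ x, f x ^ 2 ∂μ - A ^ 2) :=
    expand ▸ integral_nonneg fun x ↦ sq_nonneg _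
  rcases (measureReal_nonneg (μ := μ) (s := univ)).eq_or_lt with hV | hV
  · have hμ : μ = 0 := by
      rwa [eq_comm, measureReal_eq_zero_iff, Measure.measure_univ_eq_zero] at hV
    simp [A, hμ]
  · nlinarith

theorem lintegral_Ioo_zero_rpow_eq_top {p t : ℝ} (hp : p ≤ -1) (ht : 0 < t) :
    ∫⁻ s in Ioo 0 t, ENNReal.ofReal (s ^ p) = ∞ := by
  by_contra h
  have hmeas : AEStronglyMeasurable (fun s : ℝ ↦ s ^ p) (volume.restrict (Ioo 0 t)) :=
    (continuousOn_id.rpow_const fun s hs ↦ Or.inl hs.1.ne').aestronglyMeasurable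
      measurableSet_Ioo
  have hint := (lintegral_ofReal_ne_top_iff_integrable hmeas
    ((ae_restrict_iff' measurableSet_Ioo).2 (ae_of_all _ fun s hs ↦ rpow_nonneg hs.1.le p))).1 h
  exact hp.not_gt ((intervalIntegral.integrableOn_Ioo_rpow_iff ht).1 hint)

theorem circleMap_zero_eq_polarCoord_symm (s θ : ℝ) :
    circleMap 0 s θ = Complex.polarCoord.symm (s, θ) := by
  simp [circleMap, Complex.exp_mul_I]

theorem lintegral_ball_diff_zero_eq_lintegral_polar {g : ℂ → ℝ≥0∞} {R : ℝ}
    (hg : ContinuousOn g (ball 0 R \ {0})) :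
    ∫⁻ z in ball 0 R \ {0}, g z =
      ∫⁻ s in Ioo 0 R, ENNReal.ofReal s * ∫⁻ θ in Ioo (-π) π, g (circleMap 0 s θ) := by
  set A : Set (ℝ × ℝ) := Ioo 0 R ×ˢ Ioo (-π) π
  have hA : MeasurableSet A := measurableSet_Ioo.prod measurableSet_Ioo
  have hA_target : A ⊆ polarCoord.target := prod_mono Ioo_subset_Ioi_self le_rfl
  have hmem : ∀ p ∈ polarCoord.target,
      Complex.polarCoord.symm p ∈ ball 0 R \ {0} ↔ p ∈ A := by
    rintro ⟨s, θ⟩ ⟨hs, hθ⟩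
    have hs : 0 < s := hs
    rw [mem_sdiff, mem_ball_zero_iff, mem_singleton_iff, ← norm_eq_zero,
      Complex.norm_polarCoord_symm, abs_of_pos hs]
    simp [A, hs, hθ, hs.ne']
  have hmeas : AEMeasurable (fun p : ℝ × ℝ ↦ ENNReal.ofReal p.1 * g (Complex.polarCoord.symm p))
      (volume.restrict A) :=
    measurable_fst.ennreal_ofReal.aemeasurable.mul <|
      (hg.comp (Complex.polarCoord.continuousOn_symm.mono hA_target)
        fun p hp ↦ (hmem p (hA_target hp)).2 hp).aemeasurable hA
  calc ∫⁻ z in ball 0 R \ {0}, g z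
      = ∫⁻ p in polarCoord.target,
          ENNReal.ofReal p.1 • (ball 0 R \ {0}).indicator g (Complex.polarCoord.symm p) := by
        rw [Complex.lintegral_comp_polarCoord_symm,
          lintegral_indicator (isOpen_ball.sdiff isClosed_singleton).measurableSet]
    _ = ∫⁻ p in polarCoord.target,
          A.indicator (fun p ↦ ENNReal.ofReal p.1 * g (Complex.polarCoord.symm p)) p := by
        refine setLIntegral_congr_fun polarCoord.open_target.measurableSet fun p hp ↦ ?_
        by_cases hpA : p ∈ A
        · rw [indicator_of_mem ((hmem p hp).2 hpA), indicator_of_mem hpA, smul_eq_mul]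
        · rw [indicator_of_notMem (mt (hmem p hp).1 hpA), indicator_of_notMem hpA, smul_zero]
    _ = ∫⁻ p in A, ENNReal.ofReal p.1 * g (Complex.polarCoord.symm p) := by
        rw [lintegral_indicator hA, Measure.restrict_restrict hA, inter_eq_left.2 hA_target]
    _ = ∫⁻ s in Ioo 0 R, ∫⁻ θ in Ioo (-π) π, ENNReal.ofReal s * g (circleMap 0 s θ) := by
        rw [Measure.volume_eq_prod, setLIntegral_prod _ (by rwa [← Measure.volume_eq_prod])]
        simp_rw [circleMap_zero_eq_polarCoord_symm]
    _ = ∫⁻ s in Ioo 0 R, ENNReal.ofReal s * ∫⁻ θ in Ioo (-π) π, g (circleMap 0 s θ) := by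
        simp_rw [lintegral_const_mul' _ _ ENNReal.ofReal_ne_top]

theorem circleIntegral_eq_of_differentiableOn_ball_diff_center {E : Type*}
    [NormedAddCommGroup E] [NormedSpace ℂ E] {f : ℂ → E} {c : ℂ} {R r₁ r₂ : ℝ}
    (hf : DifferentiableOn ℂ f (ball c R \ {c})) (h₁ : r₁ ∈ Ioo 0 R) (h₂ : r₂ ∈ Ioo 0 R) :
    ∮ z in C(c, r₁), f z = ∮ z in C(c, r₂), f z := by
  wlog h : r₁ ≤ r₂ generalizing r₁ r₂
  · exact (this h₂ h₁ (le_of_not_ge h)).symm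
  have hsub : closedBall c r₂ \ ball c r₁ ⊆ ball c R \ {c} := by
    rintro z ⟨hz₂, hz₁⟩
    refine ⟨closedBall_subset_ball h₂.2 hz₂, fun hzc ↦ hz₁ ?_⟩
    rw [mem_singleton_iff.1 hzc]
    exact mem_ball_self h₁.1
  refine (Complex.circleIntegral_eq_of_differentiable_on_annulus_off_countable h₁.1 h
    countable_empty (hf.continuousOn.mono hsub) fun z hz ↦ ?_).symm
  exact hf.differentiableAt ((isOpen_ball.sdiff isClosed_singleton).mem_nhds
    (hsub ⟨ball_subset_closedBall hz.1.1, fun h ↦ hz.1.2 (ball_subset_closedBall h)⟩))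

namespace circleIntegral

theorem norm_integral_sq_le {E : Type*} [NormedAddCommGroup E] [NormedSpace ℂ E] {f : ℂ → E}
    {c : ℂ} {R : ℝ} (hR : 0 ≤ R) (hf : ContinuousOn f (sphere c R)) :
    ‖∮ z in C(c, R), f z‖ ^ 2 ≤
      2 * π * R ^ 2 * ∫ θ in Ioo (-π) π, ‖f (circleMap c R θ)‖ ^ 2 := by
  set g : ℝ → ℝ := fun θ ↦ ‖f (circleMap c R θ)‖
  have hg : Continuous g :=
    (hf.comp_continuous (continuous_circleMap c R) (circleMap_mem_sphere c hR)).norm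
  have hg_periodic : Function.Periodic g (2 * π) := fun θ ↦ by
    simp [g, periodic_circleMap c R θ]
  have hnorm : ‖∮ z in C(c, R), f z‖ ≤ R * ∫ θ in Ioo (-π) π, g θ :=
    calc ‖∮ z in C(c, R), f z‖
        ≤ ∫ θ in 0..2 * π, ‖deriv (circleMap c R) θ • f (circleMap c R θ)‖ :=
          intervalIntegral.norm_integral_le_integral_norm two_pi_pos.le
      _ = ∫ θ in 0..2 * π, R * g θ := by simp [g, norm_smul, abs_of_nonneg hR]
      _ = R * ∫ θ in Ioo (-π) π, g θ := by
          rw [intervalIntegral.integral_const_mul, ← zero_add (2 * π),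
            ← hg_periodic.intervalIntegral_add_eq (-π) 0,
            intervalIntegral.integral_of_le (by linarith [pi_pos]),
            integral_Ioc_eq_integral_Ioo]
          ring_nf
  have hCS := sq_integral_le_measureReal_univ_mul_integral_sq
    (μ := volume.restrict (Ioo (-π) π))
    (hg.integrableOn_Icc.mono_set Ioo_subset_Icc_self)
    ((hg.pow 2).integrableOn_Icc.mono_set Ioo_subset_Icc_self)
  rw [measureReal_restrict_apply_univ, volume_real_Ioo_of_le (by linarith [pi_pos])] at hCS
  calc ‖∮ z in C(c, R), f z‖ ^ 2 ≤ R ^ 2 * (∫ θ in Ioo (-π) π, g θ) ^ 2 := by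
        rw [← mul_pow]; gcongr
    _ ≤ R ^ 2 * ((π - -π) * ∫ θ in Ioo (-π) π, g θ ^ 2) := by gcongr
    _ = 2 * π * R ^ 2 * ∫ θ in Ioo (-π) π, g θ ^ 2 := by ring

theorem norm_integral_sub_pow_mul_sq_le {f : ℂ → ℂ} {c : ℂ} {R : ℝ} (hR : 0 ≤ R) (n : ℕ)
    (hf : ContinuousOn f (sphere c R)) :
    ‖∮ z in C(c, R), (z - c) ^ n * f z‖ ^ 2 ≤
      2 * π * R ^ (2 * n + 2) * ∫ θ in Ioo (-π) π, ‖f (circleMap c R θ)‖ ^ 2 := by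
  have h := norm_integral_sq_le (f := fun z ↦ (z - c) ^ n * f z) hR
    (((continuous_sub_right c).pow n).continuousOn.mul hf)
  simp only [norm_mul, norm_pow, circleMap_sub_center, norm_circleMap_zero, abs_of_nonneg hR,
    mul_pow, MeasureTheory.integral_const_mul] at h
  convert h using 1
  ring

theorem ofReal_norm_integral_sub_pow_mul_sq_le {f : ℂ → ℂ} {c : ℂ} {R : ℝ} (hR : 0 < R) (n : ℕ)
    (hf : ContinuousOn f (sphere c R)) :
    ENNReal.ofReal
        (‖∮ z in C(c, R), (z - c) ^ n * f z‖ ^ 2 / (2 * π) * R ^ (-(2 * n + 1 : ℝ))) ≤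
      ENNReal.ofReal R * ∫⁻ θ in Ioo (-π) π, ENNReal.ofReal (‖f (circleMap c R θ)‖ ^ 2) := by
  have hg : Continuous fun θ ↦ ‖f (circleMap c R θ)‖ ^ 2 :=
    (hf.comp_continuous (continuous_circleMap c R) (circleMap_mem_sphere c hR.le)).norm.pow 2
  rw [← ofReal_integral_eq_lintegral_ofReal (hg.integrableOn_Icc.mono_set Ioo_subset_Icc_self)
    (ae_of_all _ fun θ ↦ sq_nonneg _), ← ENNReal.ofReal_mul hR.le]
  refine ENNReal.ofReal_le_ofReal ?_
  have hpow : R ^ (-(2 * n + 1 : ℝ)) = (R ^ (2 * n + 1))⁻¹ := by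
    rw [rpow_neg hR.le, ← rpow_natCast]
    push_cast
    rfl
  rw [hpow, ← div_eq_mul_inv, div_div, div_le_iff₀ (by positivity)]
  calc _ ≤ _ := norm_integral_sub_pow_mul_sq_le hR.le n hf
    _ = _ := by ring

end circleIntegral

theorem ofReal_norm_circleIntegral_sq_mul_lintegral_rpow_le {F : ℂ → ℂ} {R ρ : ℝ}
    (hF : DifferentiableOn ℂ F (ball 0 R \ {0})) (n : ℕ) (hρ : ρ ∈ Ioo 0 R) :
    ENNReal.ofReal (‖∮ z in C(0, ρ), z ^ n * F z‖ ^ 2 / (2 * π)) *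
        ∫⁻ s in Ioo 0 R, ENNReal.ofReal (s ^ (-(2 * n + 1 : ℝ))) ≤
      ∫⁻ z in ball 0 R \ {0}, ENNReal.ofReal (‖F z‖ ^ 2) := by
  set I := ∮ z in C(0, ρ), z ^ n * F z
  have hbound : ∀ s ∈ Ioo 0 R,
      ENNReal.ofReal (‖I‖ ^ 2 / (2 * π)) * ENNReal.ofReal (s ^ (-(2 * n + 1 : ℝ))) ≤
        ENNReal.ofReal s * ∫⁻ θ in Ioo (-π) π, ENNReal.ofReal (‖F (circleMap 0 s θ)‖ ^ 2) := by
    intro s hs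
    have hFs : ContinuousOn F (sphere 0 s) := hF.continuousOn.mono fun z hz ↦
      ⟨sphere_subset_closedBall.trans (closedBall_subset_ball hs.2) hz,
        ne_of_mem_sphere hz hs.1.ne'⟩
    have hI : ∮ z in C(0, s), z ^ n * F z = I :=
      circleIntegral_eq_of_differentiableOn_ball_diff_center
        ((differentiableOn_pow n).mul hF) hs hρ
    rw [← ENNReal.ofReal_mul (by positivity), ← hI]
    simpa using circleIntegral.ofReal_norm_integral_sub_pow_mul_sq_le hs.1 n hFs
  calc _ = ∫⁻ s in Ioo 0 R,
        ENNReal.ofReal (‖I‖ ^ 2 / (2 * π)) * ENNReal.ofReal (s ^ (-(2 * n + 1 : ℝ))) :=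
        (lintegral_const_mul' _ _ ENNReal.ofReal_ne_top).symm
    _ ≤ ∫⁻ s in Ioo 0 R, ENNReal.ofReal s *
        ∫⁻ θ in Ioo (-π) π, ENNReal.ofReal (‖F (circleMap 0 s θ)‖ ^ 2) :=
        setLIntegral_mono' measurableSet_Ioo hbound
    _ = ∫⁻ z in ball 0 R \ {0}, ENNReal.ofReal (‖F z‖ ^ 2) :=
        (lintegral_ball_diff_zero_eq_lintegral_polar (g := fun z ↦ ENNReal.ofReal (‖F z‖ ^ 2))
          (ENNReal.continuous_ofReal.comp_continuousOn (hF.continuousOn.norm.pow 2))).symm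

/-- For a holomorphic function on the punctured unit disk with finite
`L²`-norm, all Laurent coefficients of negative index vanish: for every `n : ℕ` and
every radius `ρ ∈ (0,1)`, the circle integral `∮_{|z|=ρ} zⁿ F(z) dz` is zero. -/
theorem laurent_negative_coefficients_vanish
    (F : ℂ → ℂ)
    (hF : ∀ z ∈ Metric.ball (0 : ℂ) 1 \ {0}, DifferentiableAt ℂ F z)
    (hL2 : (∫⁻ z in Metric.ball (0 : ℂ) 1 \ {0},
        ENNReal.ofReal (‖F z‖ ^ 2)) < ⊤) :
    ∀ (n : ℕ) (ρ : ℝ), ρ ∈ Set.Ioo (0 : ℝ) 1 →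
      (∮ z in C(0, ρ), z ^ n * F z) = 0 := by
  intro n ρ hρ
  by_contra hI
  have hpos : 0 < ‖∮ z in C(0, ρ), z ^ n * F z‖ ^ 2 / (2 * π) :=
    div_pos (pow_pos (norm_pos_iff.2 hI) 2) two_pi_pos
  have hfinite := (ofReal_norm_circleIntegral_sq_mul_lintegral_rpow_le
    (fun z hz ↦ (hF z hz).differentiableWithinAt) n hρ).trans_lt hL2
  rw [lintegral_Ioo_zero_rpow_eq_top (by linarith [n.cast_nonneg (α := ℝ)]) one_pos,
    ENNReal.mul_top (ENNReal.ofReal_pos.2 hpos).ne'] at hfinite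
  exact lt_irrefl _ hfinite
end

section
/- For all real numbers R > 0, s ∈ [0,R], and 0 < k ≤ k′, the normalized hyperbolic ratios are monotone in the frequency: cosh(k′s)/cosh(k′R) ≤ cosh(ks)/cosh(kR) and sinh(k′s)/sinh(k′R) ≤ sinh(ks)/sinh(kR). -/
/-!
Both ratios have the form `φ (t * s) / φ (t * R)` with `φ` positive on `(0, ∞)`. Its derivative in
`t` is nonpositive as soon as `x ↦ x * φ' x / φ x` is nondecreasing on `[0, ∞)`, compared at
`t * s ≤ t * R`. For `φ = cosh` this is `x * tanh x`, a product of nonnegative nondecreasing factors.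
For `φ = sinh` it is `x * coth x`, and the product-to-sum formulas reduce its monotonicity to that of
`sinh x / x`, a secant slope of `sinh`, which is convex on `[0, ∞)`.
-/

open Real Set

theorem convexOn_sinh_Ici : ConvexOn ℝ (Ici 0) sinh := by
  refine MonotoneOn.convexOn_of_deriv (convex_Ici 0) continuous_sinh.continuousOn
    differentiable_sinh.differentiableOn ?_
  rw [Real.deriv_sinh, interior_Ici]
  intro x hx y hy hxy
  rw [cosh_le_cosh, abs_of_pos hx, abs_of_pos hy]
  exact hxy

theorem mul_sinh_le_mul_sinh {u v : ℝ} (hu : 0 ≤ u) (huv : u ≤ v) :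
    v * sinh u ≤ u * sinh v := by
  rcases hu.eq_or_lt with rfl | hu
  · simp
  have hv : 0 < v := hu.trans_le huv
  have := convexOn_sinh_Ici.secant_mono self_mem_Ici hu.le hv.le hu.ne' hv.ne' huv
  simp only [sinh_zero, sub_zero] at this
  rw [div_le_div_iff₀ hu hv] at this
  linarith

theorem mul_sinh_mul_cosh_le {a b : ℝ} (ha : 0 ≤ a) (hab : a ≤ b) :
    a * sinh a * cosh b ≤ b * sinh b * cosh a := by
  have hsub : 0 ≤ sinh b * cosh a - cosh b * sinh a := by
    rw [← sinh_sub, sinh_nonneg_iff, sub_nonneg]; exact hab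
  have hb : 0 ≤ sinh b * cosh a := mul_nonneg (sinh_nonneg_iff.2 (ha.trans hab)) (cosh_pos a).le
  linear_combination mul_nonneg ha hsub + mul_nonneg (sub_nonneg.2 hab) hb

theorem mul_cosh_mul_sinh_le {a b : ℝ} (ha : 0 ≤ a) (hab : a ≤ b) :
    a * cosh a * sinh b ≤ b * cosh b * sinh a := by
  have key := mul_sinh_le_mul_sinh (sub_nonneg.2 hab) (by linarith : b - a ≤ b + a)
  rw [sinh_sub, sinh_add] at key
  linear_combination key / 2

theorem antitoneOn_comp_mul_div_comp_mul {φ φ' : ℝ → ℝ} (hφ : ∀ x, HasDerivAt φ (φ' x) x)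
    (hφ_pos : ∀ x, 0 < x → 0 < φ x)
    (hφ' : ∀ a b, 0 ≤ a → a ≤ b → a * φ' a * φ b ≤ b * φ' b * φ a)
    {s R : ℝ} (hs : 0 ≤ s) (hsR : s ≤ R) (hR : 0 < R) :
    AntitoneOn (fun t ↦ φ (t * s) / φ (t * R)) (Ioi 0) := by
  have hφ_cont : Continuous φ := continuous_iff_continuousAt.2 fun x ↦ (hφ x).continuousAt
  have hden : ∀ t, 0 < t → 0 < φ (t * R) := fun t ht ↦ hφ_pos _ (mul_pos ht hR)
  have hderiv : ∀ c t, HasDerivAt (fun t ↦ φ (t * c)) (φ' (t * c) * c) t := fun c t ↦ by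
    simpa [Function.comp_def] using (hφ (t * c)).comp t ((hasDerivAt_id t).mul_const c)
  refine antitoneOn_of_hasDerivWithinAt_nonpos (convex_Ioi 0)
    (f' := fun t ↦ (φ' (t * s) * s * φ (t * R) - φ (t * s) * (φ' (t * R) * R)) / φ (t * R) ^ 2)
    (ContinuousOn.div (by fun_prop) (by fun_prop) fun t ht ↦ (hden t ht).ne') (fun t ht ↦ ?_)
    (fun t ht ↦ ?_)
  · rw [interior_Ioi] at ht
    exact ((hderiv s t).div (hderiv R t) (hden t ht).ne').hasDerivWithinAt
  · rw [interior_Ioi] at ht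
    have h := hφ' (t * s) (t * R) (mul_nonneg ht.le hs) (mul_le_mul_of_nonneg_left hsR ht.le)
    refine div_nonpos_of_nonpos_of_nonneg ?_ (sq_nonneg _)
    refine nonpos_of_mul_nonpos_right ?_ ht
    linear_combination h

/-- For `R > 0`, `s ∈ [0,R]`, and `0 < k ≤ k'`, the normalized
hyperbolic ratios are monotone in the frequency:
`cosh(k's)/cosh(k'R) ≤ cosh(ks)/cosh(kR)` and
`sinh(k's)/sinh(k'R) ≤ sinh(ks)/sinh(kR)`. -/
theorem hyperbolic_ratio_monotone
    (R s k k' : ℝ) (hR : 0 < R) (hs : s ∈ Set.Icc (0 : ℝ) R)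
    (hk : 0 < k) (hkk' : k ≤ k') :
    Real.cosh (k' * s) / Real.cosh (k' * R) ≤ Real.cosh (k * s) / Real.cosh (k * R) ∧
    Real.sinh (k' * s) / Real.sinh (k' * R) ≤ Real.sinh (k * s) / Real.sinh (k * R) := by
  obtain ⟨hs0, hsR⟩ := hs
  have hk' : 0 < k' := hk.trans_le hkk'
  exact ⟨antitoneOn_comp_mul_div_comp_mul hasDerivAt_cosh (fun x _ ↦ cosh_pos x)
      (fun _ _ ↦ mul_sinh_mul_cosh_le) hs0 hsR hR hk hk' hkk',
    antitoneOn_comp_mul_div_comp_mul hasDerivAt_sinh (fun _ ↦ sinh_pos_iff.2)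
      (fun _ _ ↦ mul_cosh_mul_sinh_le) hs0 hsR hR hk hk' hkk'⟩
end

section
/- For every R > 0, every s ∈ [−R,R], and every real number k ≥ 1, one has cosh(ks)/cosh(kR) ≤ 3 e^{−R} cosh(s) ≤ 3 ρ(s) and |sinh(ks)|/sinh(kR) ≤ 3 e^{−R} cosh(s) ≤ 3 ρ(s), where ρ(s) := (8 e^{−2R} cosh(2s))^{1/2}. -/
/-- For `R > 0`, `s ∈ [-R,R]`, and `k ≥ 1`,
`cosh(ks)/cosh(kR) ≤ 3 e^{-R} cosh(s) ≤ 3 ρ(s)` and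
`|sinh(ks)|/sinh(kR) ≤ 3 e^{-R} cosh(s) ≤ 3 ρ(s)`, where
`ρ(s) = (8 e^{-2R} cosh(2s))^{1/2}`. -/
theorem hyperbolic_ratio_weight_bound
    (R s k : ℝ) (hR : 0 < R) (hs : s ∈ Set.Icc (-R) R) (hk : 1 ≤ k) :
    Real.cosh (k * s) / Real.cosh (k * R) ≤ 3 * Real.exp (-R) * Real.cosh s ∧
    |Real.sinh (k * s)| / Real.sinh (k * R) ≤ 3 * Real.exp (-R) * Real.cosh s ∧
    3 * Real.exp (-R) * Real.cosh s ≤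
      3 * Real.sqrt (8 * Real.exp (-2 * R) * Real.cosh (2 * s)) := by
  obtain ⟨hs1, hs2⟩ := hs
  set t := |s| with ht
  have ht0 : 0 ≤ t := abs_nonneg s
  have htR : t ≤ R := abs_le.mpr ⟨hs1, hs2⟩
  have hk0 : 0 ≤ k := le_trans zero_le_one hk
  have hkst : |k * s| = k * t := by rw [abs_mul, abs_of_nonneg hk0]
  have hcosh_ks : Real.cosh (k * s) = (Real.exp (k*t) + Real.exp (-(k*t))) / 2 := by
    rw [← Real.cosh_abs, hkst, Real.cosh_eq]
  have hcosh_s : Real.cosh s = (Real.exp t + Real.exp (-t)) / 2 := by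
    rw [← Real.cosh_abs, Real.cosh_eq]
  have hcosh_kR : Real.cosh (k*R) = (Real.exp (k*R) + Real.exp (-(k*R))) / 2 :=
    Real.cosh_eq _
  have hsinh_kR : Real.sinh (k*R) = (Real.exp (k*R) - Real.exp (-(k*R))) / 2 :=
    Real.sinh_eq _
  have eA : Real.exp (k*t) ≤ Real.exp t * Real.exp (-R) * Real.exp (k*R) := by
    rw [← Real.exp_add, ← Real.exp_add]
    exact Real.exp_le_exp.mpr (by nlinarith)
  have eB : Real.exp (-(k*t)) ≤ Real.exp (-t) * Real.exp (-R) * Real.exp (k*R) := by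
    rw [← Real.exp_add, ← Real.exp_add]
    exact Real.exp_le_exp.mpr (by nlinarith)
  have eD : Real.exp t * Real.exp (-R) * Real.exp (-(k*R)) ≤ Real.exp (-(k*t)) := by
    rw [← Real.exp_add, ← Real.exp_add]
    exact Real.exp_le_exp.mpr (by nlinarith)
  have pkR := Real.exp_pos (k*R)
  have pmkR := Real.exp_pos (-(k*R))
  have pt := Real.exp_pos t
  have pmt := Real.exp_pos (-t)
  have pmR := Real.exp_pos (-R)
  refine ⟨?_, ?_, ?_⟩
  · rw [div_le_iff₀ (Real.cosh_pos _)]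
    rw [hcosh_ks, hcosh_s, hcosh_kR]
    nlinarith [mul_pos pmt pmR, mul_pos pt pmR, mul_pos (mul_pos pt pmR) pmkR,
      mul_pos (mul_pos pmt pmR) pmkR]
  · have hsinhpos : 0 < Real.sinh (k*R) := Real.sinh_pos_iff.mpr (by positivity)
    rw [div_le_iff₀ hsinhpos, Real.abs_sinh, hkst]
    have hsinh_kt : Real.sinh (k*t) = (Real.exp (k*t) - Real.exp (-(k*t))) / 2 :=
      Real.sinh_eq _
    rw [hsinh_kt, hcosh_s, hsinh_kR]
    have hE : Real.exp (-(k*R)) ≤ Real.exp (k*R) := Real.exp_le_exp.mpr (by nlinarith)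
    nlinarith [mul_nonneg (mul_nonneg pmt.le pmR.le) (sub_nonneg.mpr hE),
      mul_nonneg (mul_nonneg pt.le pmR.le) (sub_nonneg.mpr hE)]
  · have h1 : Real.exp (-R) * Real.cosh s ≤
        Real.sqrt (8 * Real.exp (-2 * R) * Real.cosh (2 * s)) := by
      rw [show Real.exp (-R) * Real.cosh s
          = Real.sqrt ((Real.exp (-R) * Real.cosh s)^2) from
          (Real.sqrt_sq (by positivity)).symm]
      apply Real.sqrt_le_sqrt
      have h2 : Real.exp (-2 * R) = Real.exp (-R) * Real.exp (-R) := by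
        rw [← Real.exp_add]; ring_nf
      have h3 := Real.cosh_two_mul s
      nlinarith [Real.one_le_cosh s, Real.exp_pos (-R), sq_nonneg (Real.cosh s)]
    nlinarith [h1]
end

section
/- Let R > 0 and let f, g be smooth functions, 1-periodic in t, defined on an open neighbourhood of {s+it : |s| ≤ R} and satisfying there ∂_s f = −∂_t g and ∂_t f = ∂_s g (equivalently, F := f − ig is holomorphic in z = s+it), so that η = f ds + g dt is a harmonic 1-form on the cylinder [−R,R]×S¹. Let P := ∫₀¹ g(0,t) dt be its period, S̃ := −∫₀¹ f(0,t) dt its co-period, and ρ(s) := (8 e^{−2R} cosh(2s))^{1/2}. Then for all s ∈ [−R,R]: ‖f(s,·) + S̃‖_{L²(S¹)} ≤ 6 ρ(s) · max{‖f(R,·) + S̃‖_{L²(S¹)}, ‖f(−R,·) + S̃‖_{L²(S¹)}} and ‖g(s,·) − P‖_{L²(S¹)} ≤ 6 ρ(s) · max{‖g(R,·) − P‖_{L²(S¹)}, ‖g(−R,·) − P‖_{L²(S¹)}}. -/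
open MeasureTheory

set_option maxHeartbeats 1000000

open MeasureTheory Set intervalIntegral
open scoped Interval

noncomputable section Harm

/-- s-partial derivative of a two-variable function. -/
def pds (H : ℝ × ℝ → ℝ) : ℝ × ℝ → ℝ := fun p => fderiv ℝ H p (1, 0)
/-- t-partial derivative of a two-variable function. -/
def pdt (H : ℝ × ℝ → ℝ) : ℝ × ℝ → ℝ := fun p => fderiv ℝ H p (0, 1)

lemma hasDerivAt_pds {H : ℝ × ℝ → ℝ} {p : ℝ × ℝ} (hd : DifferentiableAt ℝ H p) :
    HasDerivAt (fun s => H (s, p.2)) (pds H p) p.1 := by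
  have h1 : HasDerivAt (fun s : ℝ => (s, p.2)) ((1 : ℝ), (0 : ℝ)) p.1 :=
    (hasDerivAt_id p.1).prodMk (hasDerivAt_const p.1 p.2)
  have h2 : HasFDerivAt H (fderiv ℝ H p) ((fun s : ℝ => (s, p.2)) p.1) := by
    simpa using hd.hasFDerivAt
  simpa [Function.comp_def, pds] using HasFDerivAt.comp_hasDerivAt (l := H) (f := fun s : ℝ => (s, p.2)) (x := p.1) h2 h1

lemma hasDerivAt_pdt {H : ℝ × ℝ → ℝ} {p : ℝ × ℝ} (hd : DifferentiableAt ℝ H p) :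
    HasDerivAt (fun t => H (p.1, t)) (pdt H p) p.2 := by
  have h1 : HasDerivAt (fun t : ℝ => (p.1, t)) ((0 : ℝ), (1 : ℝ)) p.2 :=
    (hasDerivAt_const p.2 p.1).prodMk (hasDerivAt_id p.2)
  have h2 : HasFDerivAt H (fderiv ℝ H p) ((fun t : ℝ => (p.1, t)) p.2) := by
    simpa using hd.hasFDerivAt
  simpa [Function.comp_def, pdt] using HasFDerivAt.comp_hasDerivAt (l := H) (f := fun t : ℝ => (p.1, t)) (x := p.2) h2 h1

lemma contDiffOn_pds {H : ℝ × ℝ → ℝ} {U : Set (ℝ × ℝ)} (hU : IsOpen U)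
    (hH : ContDiffOn ℝ (⊤ : ℕ∞) H U) : ContDiffOn ℝ (⊤ : ℕ∞) (pds H) U := by
  have h1 : ContDiffOn ℝ (⊤ : ℕ∞) (fun p => fderiv ℝ H p) U :=
    hH.fderiv_of_isOpen hU (by simp)
  exact (ContinuousLinearMap.apply ℝ ℝ ((1 : ℝ), (0 : ℝ))).contDiff.comp_contDiffOn h1

lemma contDiffOn_pdt {H : ℝ × ℝ → ℝ} {U : Set (ℝ × ℝ)} (hU : IsOpen U)
    (hH : ContDiffOn ℝ (⊤ : ℕ∞) H U) : ContDiffOn ℝ (⊤ : ℕ∞) (pdt H) U := by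
  have h1 : ContDiffOn ℝ (⊤ : ℕ∞) (fun p => fderiv ℝ H p) U :=
    hH.fderiv_of_isOpen hU (by simp)
  exact (ContinuousLinearMap.apply ℝ ℝ ((0 : ℝ), (1 : ℝ))).contDiff.comp_contDiffOn h1

lemma fderiv_apply_const {H : ℝ × ℝ → ℝ} {U : Set (ℝ × ℝ)} (hU : IsOpen U)
    (hH : ContDiffOn ℝ (⊤ : ℕ∞) H U) {p : ℝ × ℝ} (hp : p ∈ U) (v w : ℝ × ℝ) :
    fderiv ℝ (fun q => fderiv ℝ H q v) p w = fderiv ℝ (fderiv ℝ H) p w v := by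
  have hdf : DifferentiableAt ℝ (fderiv ℝ H) p := by
    have h1 : ContDiffOn ℝ (⊤ : ℕ∞) (fun p => fderiv ℝ H p) U := hH.fderiv_of_isOpen hU (by simp)
    exact ((h1 p hp).contDiffAt (hU.mem_nhds hp)).differentiableAt (by simp)
  have := fderiv_clm_apply hdf (differentiableAt_const v)
  rw [show (fun q => fderiv ℝ H q v) = (fun q => (fderiv ℝ H q) ((fun _ => v) q)) from rfl]
  rw [this]
  simp

lemma schwarz_swap {H : ℝ × ℝ → ℝ} {U : Set (ℝ × ℝ)} (hU : IsOpen U)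
    (hH : ContDiffOn ℝ (⊤ : ℕ∞) H U) {p : ℝ × ℝ} (hp : p ∈ U) :
    pds (pdt H) p = pdt (pds H) p := by
  have hat : ContDiffAt ℝ (⊤ : ℕ∞) H p := (hH p hp).contDiffAt (hU.mem_nhds hp)
  have hsymm : IsSymmSndFDerivAt ℝ H p := hat.isSymmSndFDerivAt (by rw [minSmoothness_of_isRCLikeNormedField]; exact WithTop.coe_le_coe.mpr (le_top : (2:ℕ∞) ≤ ⊤))
  have e1 := fderiv_apply_const hU hH hp ((0:ℝ),(1:ℝ)) ((1:ℝ),(0:ℝ))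
  have e2 := fderiv_apply_const hU hH hp ((1:ℝ),(0:ℝ)) ((0:ℝ),(1:ℝ))
  have := hsymm ((1:ℝ),(0:ℝ)) ((0:ℝ),(1:ℝ))
  have hu1 : pdt H = fun q => fderiv ℝ H q ((0:ℝ),(1:ℝ)) := rfl
  have hu2 : pds H = fun q => fderiv ℝ H q ((1:ℝ),(0:ℝ)) := rfl
  show fderiv ℝ (pdt H) p ((1:ℝ),(0:ℝ)) = fderiv ℝ (pds H) p ((0:ℝ),(1:ℝ))
  rw [hu1, hu2, e1, e2]
  exact this



/-- Cauchy–Schwarz for interval integrals of a continuous function. -/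
lemma cs_interval {u : ℝ → ℝ} {a b : ℝ} (hab : a ≤ b) (hu : ContinuousOn u (Icc a b)) :
    (∫ t in a..b, u t) ^ 2 ≤ (b - a) * ∫ t in a..b, (u t) ^ 2 := by
  rcases eq_or_lt_of_le hab with h | h
  · subst h; simp
  have hI : IntervalIntegrable u volume a b := by
    apply ContinuousOn.intervalIntegrable; rwa [uIcc_of_le hab]
  have hI2 : IntervalIntegrable (fun t => (u t) ^ 2) volume a b := by
    apply ContinuousOn.intervalIntegrable
    rw [uIcc_of_le hab]; exact hu.pow 2
  set I : ℝ := ∫ t in a..b, u t with hIdef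
  set J : ℝ := ∫ t in a..b, (u t) ^ 2 with hJdef
  have hba : (0:ℝ) < b - a := by linarith
  set c : ℝ := I / (b - a) with hc
  have key : (0 : ℝ) ≤ ∫ t in a..b, (u t - c) ^ 2 :=
    intervalIntegral.integral_nonneg hab (fun t _ => sq_nonneg _)
  have expand : ∫ t in a..b, (u t - c) ^ 2 = J - 2 * c * I + c ^ 2 * (b - a) := by
    have h1 : ∀ t, (u t - c)^2 = (u t)^2 - (2*c) * u t + c^2 := by intro t; ring
    simp_rw [h1]
    rw [intervalIntegral.integral_add (hI2.sub (hI.const_mul (2*c))) intervalIntegrable_const,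
      intervalIntegral.integral_sub hI2 (hI.const_mul (2*c)),
      intervalIntegral.integral_const_mul, intervalIntegral.integral_const]
    rw [smul_eq_mul]
    ring
  rw [expand, hc] at key
  have key2 : 0 ≤ J - I ^ 2 / (b - a) := by
    have e : I / (b - a) * I = I^2 / (b - a) := by ring
    calc (0:ℝ) ≤ J - 2 * (I / (b-a)) * I + (I/(b-a))^2 * (b-a) := key
      _ = J - I^2/(b-a) := by field_simp; ring
  have key3 : I ^ 2 / (b - a) ≤ J := by linarith
  rw [div_le_iff₀ hba] at key3
  linarith [key3]

lemma integral_sqrt_le {c : ℝ} (hc0 : 0 ≤ c) (hc1 : c ≤ 1) :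
    (∫ x in (0:ℝ)..c, Real.sqrt x) ≤ (2/3) * c := by
  have h1 : (∫ x in (0:ℝ)..c, Real.sqrt x) = ∫ x in (0:ℝ)..c, x ^ ((1:ℝ)/2) := by
    apply intervalIntegral.integral_congr
    intro x hx
    exact Real.sqrt_eq_rpow x
  have h2 : (∫ x in (0:ℝ)..c, x ^ ((1:ℝ)/2)) = (c ^ ((1:ℝ)/2 + 1) - 0 ^ ((1:ℝ)/2 + 1)) / ((1:ℝ)/2 + 1) := by
    exact integral_rpow (Or.inl (by norm_num))
  have h3 : (0:ℝ) ^ ((1:ℝ)/2 + 1) = 0 := by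
    rw [Real.zero_rpow]; norm_num
  have h4 : c ^ ((1:ℝ)/2 + 1) ≤ c := by
    rcases eq_or_lt_of_le hc0 with h | h
    · rw [← h, Real.zero_rpow]; norm_num
    · calc c ^ ((1:ℝ)/2 + 1) ≤ c ^ (1:ℝ) :=
            Real.rpow_le_rpow_of_exponent_ge h hc1 (by norm_num)
        _ = c := Real.rpow_one c
  rw [h1, h2, h3, sub_zero]
  have h5 : c ^ ((1:ℝ)/2 + 1) / ((1:ℝ)/2 + 1) = (2/3) * c ^ ((1:ℝ)/2+1) := by
    norm_num
    ring
  rw [h5]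
  nlinarith [h4]

lemma integral_sqrt_abs_le {t : ℝ} (ht0 : 0 ≤ t) (ht1 : t ≤ 1) :
    (∫ t' in (0:ℝ)..1, Real.sqrt |t - t'|) ≤ 2/3 := by
  have hcont : ∀ a b : ℝ, IntervalIntegrable (fun t' => Real.sqrt |t - t'|) volume a b := by
    intro a b
    apply Continuous.intervalIntegrable
    exact (Real.continuous_sqrt.comp (continuous_const.sub continuous_id).abs)
  have hsplit : (∫ t' in (0:ℝ)..t, Real.sqrt |t - t'|) + (∫ t' in t..1, Real.sqrt |t - t'|)
      = ∫ t' in (0:ℝ)..1, Real.sqrt |t - t'| :=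
    intervalIntegral.integral_add_adjacent_intervals (hcont 0 t) (hcont t 1)
  have e1 : (∫ t' in (0:ℝ)..t, Real.sqrt |t - t'|) = ∫ t' in (0:ℝ)..t, Real.sqrt (t - t') := by
    apply intervalIntegral.integral_congr
    intro x hx
    rw [uIcc_of_le ht0] at hx
    show Real.sqrt |t - x| = Real.sqrt (t - x)
    rw [abs_of_nonneg (by linarith [hx.2])]
  have e2 : (∫ t' in (0:ℝ)..t, Real.sqrt (t - t')) = ∫ x in (0:ℝ)..t, Real.sqrt x := by
    have := intervalIntegral.integral_comp_sub_left (a := (0:ℝ)) (b := t) (fun x => Real.sqrt x) t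
    simpa using this
  have e3 : (∫ t' in t..1, Real.sqrt |t - t'|) = ∫ t' in t..1, Real.sqrt (t' - t) := by
    apply intervalIntegral.integral_congr
    intro x hx
    rw [uIcc_of_le ht1] at hx
    show Real.sqrt |t - x| = Real.sqrt (x - t)
    rw [abs_of_nonpos (by linarith [hx.1]), neg_sub]
  have e4 : (∫ t' in t..1, Real.sqrt (t' - t)) = ∫ x in (0:ℝ)..(1-t), Real.sqrt x := by
    have := intervalIntegral.integral_comp_sub_right (a := t) (b := 1) (fun x => Real.sqrt x) t
    simpa using this
  have b1 := integral_sqrt_le ht0 ht1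
  have b2 := integral_sqrt_le (by linarith : (0:ℝ) ≤ 1 - t) (by linarith : (1:ℝ) - t ≤ 1)
  rw [← hsplit, e1, e2, e3, e4]
  linarith

/-- Weak Wirtinger inequality on `[0,1]` for mean-zero functions. -/
lemma wirtinger_weak {h h' : ℝ → ℝ}
    (hd : ∀ t ∈ Icc (0:ℝ) 1, HasDerivAt h (h' t) t)
    (hc' : ContinuousOn h' (Icc 0 1))
    (hmean : (∫ t in (0:ℝ)..1, h t) = 0) :
    (∫ t in (0:ℝ)..1, (h t)^2) ≤ (4/9) * ∫ t in (0:ℝ)..1, (h' t)^2 := by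
  have hch : ContinuousOn h (Icc 0 1) := fun t ht => (hd t ht).continuousAt.continuousWithinAt
  set A2 : ℝ := ∫ t in (0:ℝ)..1, (h' t)^2 with hA2
  have hA2nn : 0 ≤ A2 := intervalIntegral.integral_nonneg zero_le_one (fun t _ => sq_nonneg _)
  have hint : ∀ c d : ℝ, 0 ≤ c → c ≤ d → d ≤ 1 →
      IntervalIntegrable (fun t => (h' t)^2) volume c d := by
    intro c d h0c hcd hd1
    apply ContinuousOn.intervalIntegrable
    apply (hc'.pow 2).mono
    rw [uIcc_of_le hcd]
    exact Icc_subset_Icc h0c hd1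
  have hsub : ∀ a b : ℝ, 0 ≤ a → a ≤ b → b ≤ 1 → (∫ t in a..b, (h' t)^2) ≤ A2 := by
    intro a b h0a hab hb1
    have e1 : (∫ t in (0:ℝ)..a, (h' t)^2) + (∫ t in a..b, (h' t)^2) = ∫ t in (0:ℝ)..b, (h' t)^2 :=
      intervalIntegral.integral_add_adjacent_intervals (hint 0 a le_rfl h0a (by linarith))
        (hint a b h0a hab hb1)
    have e2 : (∫ t in (0:ℝ)..b, (h' t)^2) + (∫ t in b..1, (h' t)^2) = ∫ t in (0:ℝ)..1, (h' t)^2 :=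
      intervalIntegral.integral_add_adjacent_intervals (hint 0 b le_rfl (by linarith) hb1)
        (hint b 1 (by linarith) hb1 le_rfl)
    have n1 : (0:ℝ) ≤ ∫ t in (0:ℝ)..a, (h' t)^2 :=
      intervalIntegral.integral_nonneg h0a (fun t _ => sq_nonneg _)
    have n2 : (0:ℝ) ≤ ∫ t in b..1, (h' t)^2 :=
      intervalIntegral.integral_nonneg hb1 (fun t _ => sq_nonneg _)
    rw [hA2]
    linarith
  have key : ∀ t' t : ℝ, t' ∈ Icc (0:ℝ) 1 → t ∈ Icc (0:ℝ) 1 → t' ≤ t →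
      |h t - h t'| ≤ Real.sqrt A2 * Real.sqrt |t - t'| := by
    intro t' t ht' ht hle
    have hftc : ∫ y in t'..t, h' y = h t - h t' := by
      apply intervalIntegral.integral_eq_sub_of_hasDerivAt
      · intro x hx
        rw [uIcc_of_le hle] at hx
        exact hd x ⟨le_trans ht'.1 hx.1, le_trans hx.2 ht.2⟩
      · apply ContinuousOn.intervalIntegrable
        apply hc'.mono
        rw [uIcc_of_le hle]
        exact Icc_subset_Icc ht'.1 ht.2
    have hcs := cs_interval (u := h') hle (hc'.mono (Icc_subset_Icc ht'.1 ht.2))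
    have h2 : (h t - h t')^2 ≤ |t - t'| * A2 := by
      rw [← hftc]
      calc (∫ y in t'..t, h' y)^2 ≤ (t - t') * ∫ y in t'..t, (h' y)^2 := hcs
        _ ≤ |t - t'| * A2 := by
            rw [abs_of_nonneg (by linarith)]
            exact mul_le_mul_of_nonneg_left (hsub t' t ht'.1 hle ht.2) (by linarith)
    calc |h t - h t'| = Real.sqrt ((h t - h t')^2) := (Real.sqrt_sq_eq_abs _).symm
      _ ≤ Real.sqrt (|t - t'| * A2) := Real.sqrt_le_sqrt h2
      _ = Real.sqrt A2 * Real.sqrt |t - t'| := by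
          rw [Real.sqrt_mul (abs_nonneg _), mul_comm]
  have hdiff : ∀ t ∈ Icc (0:ℝ) 1, ∀ t' ∈ Icc (0:ℝ) 1,
      |h t - h t'| ≤ Real.sqrt A2 * Real.sqrt |t - t'| := by
    intro t ht t' ht'
    rcases le_total t' t with hle | hle
    · exact key t' t ht' ht hle
    · rw [abs_sub_comm, abs_sub_comm t t']
      exact key t t' ht ht' hle
  have hpt : ∀ t ∈ Icc (0:ℝ) 1, |h t| ≤ (2/3) * Real.sqrt A2 := by
    intro t ht
    have hchInt : IntervalIntegrable h volume 0 1 := by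
      apply ContinuousOn.intervalIntegrable
      rwa [uIcc_of_le zero_le_one]
    have hrepr : h t = ∫ t' in (0:ℝ)..1, (h t - h t') := by
      rw [intervalIntegral.integral_sub intervalIntegrable_const hchInt, hmean,
        intervalIntegral.integral_const]
      simp
    have int1 : IntervalIntegrable (fun t' => |h t - h t'|) volume 0 1 := by
      apply ContinuousOn.intervalIntegrable
      rw [uIcc_of_le zero_le_one]
      exact (continuousOn_const.sub hch).abs
    have int2 : IntervalIntegrable (fun t' => Real.sqrt A2 * Real.sqrt |t - t'|) volume 0 1 := by
      apply Continuous.intervalIntegrable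
      exact continuous_const.mul (Real.continuous_sqrt.comp (continuous_const.sub continuous_id).abs)
    calc |h t| = |∫ t' in (0:ℝ)..1, (h t - h t')| := by rw [← hrepr]
      _ ≤ ∫ t' in (0:ℝ)..1, |h t - h t'| :=
          intervalIntegral.abs_integral_le_integral_abs zero_le_one
      _ ≤ ∫ t' in (0:ℝ)..1, Real.sqrt A2 * Real.sqrt |t - t'| := by
          apply intervalIntegral.integral_mono_on zero_le_one int1 int2
          intro x hx
          exact hdiff t ht x hx
      _ = Real.sqrt A2 * ∫ t' in (0:ℝ)..1, Real.sqrt |t - t'| :=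
          intervalIntegral.integral_const_mul _ _
      _ ≤ Real.sqrt A2 * (2/3) :=
          mul_le_mul_of_nonneg_left (integral_sqrt_abs_le ht.1 ht.2) (Real.sqrt_nonneg _)
      _ = (2/3) * Real.sqrt A2 := mul_comm _ _
  have intsq : IntervalIntegrable (fun t => (h t)^2) volume 0 1 := by
    apply ContinuousOn.intervalIntegrable
    rw [uIcc_of_le zero_le_one]
    exact hch.pow 2
  calc (∫ t in (0:ℝ)..1, (h t)^2) ≤ ∫ t in (0:ℝ)..1, ((2/3) * Real.sqrt A2)^2 := by
        apply intervalIntegral.integral_mono_on zero_le_one intsq intervalIntegrable_const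
        intro x hx
        calc (h x)^2 = |h x|^2 := (sq_abs _).symm
          _ ≤ ((2/3) * Real.sqrt A2)^2 := by
              apply pow_le_pow_left₀ (abs_nonneg _) (hpt x hx)
    _ = ((2/3) * Real.sqrt A2)^2 := by rw [intervalIntegral.integral_const]; simp
    _ = (4/9) * A2 := by
        rw [mul_pow, Real.sq_sqrt hA2nn]
        norm_num



lemma hasDerivAt_param {sl sr tl tr : ℝ} (htl : tl < 0) (htr : 1 < tr)
    {K K' : ℝ × ℝ → ℝ}
    (hK : ContinuousOn K (Ioo sl sr ×ˢ Ioo tl tr))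
    (hK' : ContinuousOn K' (Ioo sl sr ×ˢ Ioo tl tr))
    (hdK : ∀ p ∈ Ioo sl sr ×ˢ Ioo tl tr, HasDerivAt (fun x => K (x, p.2)) (K' p) p.1)
    {s₀ : ℝ} (hs₀ : s₀ ∈ Ioo sl sr) :
    HasDerivAt (fun s => ∫ t in (0:ℝ)..1, K (s, t)) (∫ t in (0:ℝ)..1, K' (s₀, t)) s₀ := by
  obtain ⟨hsl, hsr⟩ := hs₀
  set ε := min (s₀ - sl) (sr - s₀) / 2 with hε
  have hm1 : min (s₀ - sl) (sr - s₀) ≤ s₀ - sl := min_le_left _ _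
  have hm2 : min (s₀ - sl) (sr - s₀) ≤ sr - s₀ := min_le_right _ _
  have hε0 : 0 < ε := by
    have := lt_min (by linarith : (0:ℝ) < s₀ - sl) (by linarith : (0:ℝ) < sr - s₀)
    rw [hε]; linarith
  have hIcc : Icc (s₀ - ε) (s₀ + ε) ⊆ Ioo sl sr := by
    intro x hx
    obtain ⟨hx1, hx2⟩ := hx
    constructor <;> [skip; skip] <;> rw [hε] at hx1 hx2 <;> [linarith; linarith]
  have hIoc : Ι (0:ℝ) 1 ⊆ Ioo tl tr := by
    rw [uIoc_of_le zero_le_one]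
    intro x hx
    exact ⟨lt_of_lt_of_le htl hx.1.le, lt_of_le_of_lt hx.2 htr⟩
  have hIcc01 : Icc (0:ℝ) 1 ⊆ Ioo tl tr := fun x hx => ⟨lt_of_lt_of_le htl hx.1, lt_of_le_of_lt hx.2 htr⟩
  have hballIcc : Metric.ball s₀ ε ⊆ Icc (s₀ - ε) (s₀ + ε) := by
    intro x hx
    rw [Metric.mem_ball, Real.dist_eq] at hx
    have := abs_lt.mp hx
    exact ⟨by linarith [this.1], by linarith [this.2]⟩
  have hCsub : Icc (s₀ - ε) (s₀ + ε) ×ˢ Icc (0:ℝ) 1 ⊆ Ioo sl sr ×ˢ Ioo tl tr :=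
    prod_mono hIcc hIcc01
  obtain ⟨M, hM⟩ := ((isCompact_Icc (a := s₀ - ε) (b := s₀ + ε)).prod
    (isCompact_Icc (a := (0:ℝ)) (b := 1))).exists_bound_of_continuousOn (hK'.mono hCsub)
  have hmeas : ∀ᶠ x in nhds s₀, AEStronglyMeasurable (fun t => K (x, t))
      (volume.restrict (Ι (0:ℝ) 1)) := by
    filter_upwards [Metric.ball_mem_nhds s₀ hε0] with x hx
    have hxI : x ∈ Ioo sl sr := hIcc (hballIcc hx)
    have hcont : ContinuousOn (fun t => K (x, t)) (Ι (0:ℝ) 1) := by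
      apply (hK.comp (continuous_const.prodMk continuous_id : Continuous (fun t : ℝ => (x, t))).continuousOn _).mono
        (subset_refl _)
      intro t ht
      exact mem_prod.mpr ⟨hxI, hIoc ht⟩
    exact hcont.aestronglyMeasurable measurableSet_uIoc
  have hint : IntervalIntegrable (fun t => K (s₀, t)) volume 0 1 := by
    apply ContinuousOn.intervalIntegrable
    apply (hK.comp (continuous_const.prodMk continuous_id : Continuous (fun t : ℝ => (s₀, t))).continuousOn _)
    intro t ht
    rw [uIcc_of_le zero_le_one] at ht
    exact mem_prod.mpr ⟨⟨hsl, hsr⟩, hIcc01 ht⟩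
  have hmeas' : AEStronglyMeasurable (fun t => K' (s₀, t)) (volume.restrict (Ι (0:ℝ) 1)) := by
    have hcont : ContinuousOn (fun t => K' (s₀, t)) (Ι (0:ℝ) 1) := by
      apply (hK'.comp (continuous_const.prodMk continuous_id : Continuous (fun t : ℝ => (s₀, t))).continuousOn _)
      intro t ht
      exact mem_prod.mpr ⟨⟨hsl, hsr⟩, hIoc ht⟩
    exact hcont.aestronglyMeasurable measurableSet_uIoc
  have hbound : ∀ᵐ t ∂(volume : Measure ℝ), t ∈ Ι (0:ℝ) 1 →
      ∀ x ∈ Metric.ball s₀ ε, ‖K' (x, t)‖ ≤ M := by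
    apply Filter.Eventually.of_forall
    intro t ht x hx
    apply hM
    have htI : t ∈ Icc (0:ℝ) 1 := by
      rw [uIoc_of_le zero_le_one] at ht
      exact ⟨ht.1.le, ht.2⟩
    exact mem_prod.mpr ⟨hballIcc hx, htI⟩
  have hdiff : ∀ᵐ t ∂(volume : Measure ℝ), t ∈ Ι (0:ℝ) 1 →
      ∀ x ∈ Metric.ball s₀ ε, HasDerivAt (fun y => K (y, t)) (K' (x, t)) x := by
    apply Filter.Eventually.of_forall
    intro t ht x hx
    exact hdK (x, t) (mem_prod.mpr ⟨hIcc (hballIcc hx), hIoc ht⟩)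
  exact (intervalIntegral.hasDerivAt_integral_of_dominated_loc_of_deriv_le (Metric.ball_mem_nhds s₀ hε0) hmeas hint hmeas'
    hbound intervalIntegrable_const hdiff).2



lemma energy_decay {R δ : ℝ} (hR : 0 < R) (hδ : 0 < δ) {H : ℝ × ℝ → ℝ}
    (hsm : ContDiffOn ℝ (⊤ : ℕ∞) H (Ioo (-(R+δ)) (R+δ) ×ˢ Ioo (-δ) (1+δ)))
    (hharm : ∀ p ∈ Ioo (-(R+δ)) (R+δ) ×ˢ Ioo (-δ) (1+δ), pds (pds H) p = - pdt (pdt H) p)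
    (hperH : ∀ s : ℝ, |s| ≤ R → H (s,1) = H (s,0))
    (hperHt : ∀ s : ℝ, |s| ≤ R → pdt H (s,1) = pdt H (s,0))
    (hmean : ∀ s : ℝ, |s| < R → (∫ t in (0:ℝ)..1, H (s,t)) = 0) :
    ∀ s ∈ Icc (-R) R, (∫ t in (0:ℝ)..1, (H (s,t))^2)
      ≤ (Real.cosh (2*s) / Real.cosh (2*R)) *
        max (∫ t in (0:ℝ)..1, (H (R,t))^2) (∫ t in (0:ℝ)..1, (H (-R,t))^2) := by
  have hVo : IsOpen (Ioo (-(R+δ)) (R+δ) ×ˢ Ioo (-δ) (1+δ)) := isOpen_Ioo.prod isOpen_Ioo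
  have hmemV : ∀ s t : ℝ, s ∈ Ioo (-(R+δ)) (R+δ) → t ∈ Icc (0:ℝ) 1 →
      (s,t) ∈ Ioo (-(R+δ)) (R+δ) ×ˢ Ioo (-δ) (1+δ) := by
    intro s t hs ht
    exact mem_prod.mpr ⟨hs, ⟨by linarith [ht.1], by linarith [ht.2]⟩⟩
  have hmemV' : ∀ s t : ℝ, |s| ≤ R → t ∈ Icc (0:ℝ) 1 →
      (s,t) ∈ Ioo (-(R+δ)) (R+δ) ×ˢ Ioo (-δ) (1+δ) := by
    intro s t hs ht
    have := abs_le.mp hs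
    exact hmemV s t ⟨by linarith [this.1], by linarith [this.2]⟩ ht
  have hdiffat : ∀ (G : ℝ × ℝ → ℝ), ContDiffOn ℝ (⊤ : ℕ∞) G (Ioo (-(R+δ)) (R+δ) ×ˢ Ioo (-δ) (1+δ)) →
      ∀ p ∈ Ioo (-(R+δ)) (R+δ) ×ˢ Ioo (-δ) (1+δ), DifferentiableAt ℝ G p := by
    intro G hG p hp
    exact ((hG p hp).contDiffAt (hVo.mem_nhds hp)).differentiableAt (by simp)
  have hsmS : ContDiffOn ℝ (⊤ : ℕ∞) (pds H) (Ioo (-(R+δ)) (R+δ) ×ˢ Ioo (-δ) (1+δ)) :=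
    contDiffOn_pds hVo hsm
  have hsmT : ContDiffOn ℝ (⊤ : ℕ∞) (pdt H) (Ioo (-(R+δ)) (R+δ) ×ˢ Ioo (-δ) (1+δ)) :=
    contDiffOn_pdt hVo hsm
  have hsmSS : ContDiffOn ℝ (⊤ : ℕ∞) (pds (pds H)) (Ioo (-(R+δ)) (R+δ) ×ˢ Ioo (-δ) (1+δ)) :=
    contDiffOn_pds hVo hsmS
  have hsmTT : ContDiffOn ℝ (⊤ : ℕ∞) (pdt (pdt H)) (Ioo (-(R+δ)) (R+δ) ×ˢ Ioo (-δ) (1+δ)) :=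
    contDiffOn_pdt hVo hsmT
  have hc := hsm.continuousOn
  have hcS := hsmS.continuousOn
  have hcT := hsmT.continuousOn
  have hcSS := hsmSS.continuousOn
  have hcTT := hsmTT.continuousOn
  -- first derivative of the energy
  have hE : ∀ s ∈ Ioo (-(R+δ)) (R+δ),
      HasDerivAt (fun x => ∫ t in (0:ℝ)..1, (H (x,t))^2)
        (∫ t in (0:ℝ)..1, 2 * H (s,t) * pds H (s,t)) s := by
    intro s hs
    apply hasDerivAt_param (by linarith) (by linarith)
      (K := fun p => (H p)^2) (K' := fun p => 2 * H p * pds H p)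
      (hc.pow 2) ((continuousOn_const.mul hc).mul hcS) ?_ hs
    intro p hp
    have h0 := (hasDerivAt_pds (hdiffat H hsm p hp)).fun_pow 2
    simpa using h0
  -- second derivative of the energy
  have hE1 : ∀ s ∈ Ioo (-(R+δ)) (R+δ),
      HasDerivAt (fun x => ∫ t in (0:ℝ)..1, 2 * H (x,t) * pds H (x,t))
        (∫ t in (0:ℝ)..1, (2 * (pds H (s,t))^2 + 2 * H (s,t) * pds (pds H) (s,t))) s := by
    intro s hs
    apply hasDerivAt_param (by linarith) (by linarith)
      (K := fun p => 2 * H p * pds H p)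
      (K' := fun p => 2 * (pds H p)^2 + 2 * H p * pds (pds H) p)
      ((continuousOn_const.mul hc).mul hcS)
      (((continuousOn_const.mul (hcS.pow 2))).add ((continuousOn_const.mul hc).mul hcSS)) ?_ hs
    intro p hp
    have h0 := hasDerivAt_pds (hdiffat H hsm p hp)
    have h1 := hasDerivAt_pds (hdiffat (pds H) hsmS p hp)
    have h2 := (h0.const_mul 2).mul h1
    convert! h2 using 1
    simp only [Prod.mk.eta]
    ring
  -- slice continuity helper
  have hslice : ∀ (G : ℝ × ℝ → ℝ), ContinuousOn G (Ioo (-(R+δ)) (R+δ) ×ˢ Ioo (-δ) (1+δ)) →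
      ∀ s : ℝ, |s| ≤ R → ContinuousOn (fun t => G (s,t)) (Icc (0:ℝ) 1) := by
    intro G hG s hs
    apply (hG.comp ((continuous_const.prodMk continuous_id :
      Continuous (fun t : ℝ => (s, t)))).continuousOn _)
    intro t ht
    exact hmemV' s t hs ht
  -- lower bound for the second derivative
  have hE2ge : ∀ s : ℝ, |s| < R →
      4 * (∫ t in (0:ℝ)..1, (H (s,t))^2)
        ≤ ∫ t in (0:ℝ)..1, (2 * (pds H (s,t))^2 + 2 * H (s,t) * pds (pds H) (s,t)) := by
    intro s hsR
    have hsR' : |s| ≤ R := hsR.le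
    have hd1 : ∀ t ∈ Icc (0:ℝ) 1, HasDerivAt (fun t' => H (s,t')) (pdt H (s,t)) t := by
      intro t ht
      exact hasDerivAt_pdt (hdiffat H hsm _ (hmemV' s t hsR' ht))
    have hd2 : ∀ t ∈ Icc (0:ℝ) 1, HasDerivAt (fun t' => pdt H (s,t')) (pdt (pdt H) (s,t)) t := by
      intro t ht
      exact hasDerivAt_pdt (hdiffat (pdt H) hsmT _ (hmemV' s t hsR' ht))
    -- integrability of slices
    have hci : ∀ (G : ℝ × ℝ → ℝ), ContinuousOn G (Ioo (-(R+δ)) (R+δ) ×ˢ Ioo (-δ) (1+δ)) →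
        IntervalIntegrable (fun t => G (s,t)) volume 0 1 := by
      intro G hG
      apply ContinuousOn.intervalIntegrable
      rw [uIcc_of_le zero_le_one]
      exact hslice G hG s hsR'
    -- integration by parts
    have hibp : (∫ t in (0:ℝ)..1, H (s,t) * pdt (pdt H) (s,t))
        = - ∫ t in (0:ℝ)..1, (pdt H (s,t))^2 := by
      have h := intervalIntegral.integral_mul_deriv_eq_deriv_mul
        (u := fun t => H (s,t)) (u' := fun t => pdt H (s,t))
        (v := fun t => pdt H (s,t)) (v' := fun t => pdt (pdt H) (s,t))
        (fun x hx => hd1 x (by rwa [uIcc_of_le zero_le_one] at hx))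
        (fun x hx => hd2 x (by rwa [uIcc_of_le zero_le_one] at hx))
        (hci (pdt H) hcT) (hci (pdt (pdt H)) hcTT)
      rw [h]
      beta_reduce
      rw [hperH s hsR', hperHt s hsR']
      have e : (∫ t in (0:ℝ)..1, pdt H (s,t) * pdt H (s,t))
          = ∫ t in (0:ℝ)..1, (pdt H (s,t))^2 := by
        apply intervalIntegral.integral_congr
        intro x _
        exact (sq (pdt H (s,x))).symm
      rw [e]
      ring
    -- harmonicity on the slice
    have hHssTt : (∫ t in (0:ℝ)..1, H (s,t) * pds (pds H) (s,t))
        = ∫ t in (0:ℝ)..1, (pdt H (s,t))^2 := by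
      have e : ∀ x ∈ uIcc (0:ℝ) 1, (fun t => H (s,t) * pds (pds H) (s,t)) x
          = (fun t => -(H (s,t) * pdt (pdt H) (s,t))) x := by
        intro x hx
        rw [uIcc_of_le zero_le_one] at hx
        have := hharm (s,x) (hmemV' s x hsR' hx)
        show H (s,x) * pds (pds H) (s,x) = -(H (s,x) * pdt (pdt H) (s,x))
        rw [this]
        ring
      rw [intervalIntegral.integral_congr e, intervalIntegral.integral_neg, hibp, neg_neg]
    -- Wirtinger on the slice
    have hwirt := wirtinger_weak (h := fun t => H (s,t)) (h' := fun t => pdt H (s,t))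
      hd1 (hslice (pdt H) hcT s hsR') (hmean s hsR)
    -- put the pieces together
    have hsplit : (∫ t in (0:ℝ)..1, (2 * (pds H (s,t))^2 + 2 * H (s,t) * pds (pds H) (s,t)))
        = 2 * (∫ t in (0:ℝ)..1, (pds H (s,t))^2)
          + 2 * (∫ t in (0:ℝ)..1, H (s,t) * pds (pds H) (s,t)) := by
      have i1 : IntervalIntegrable (fun t => 2 * (pds H (s,t))^2) volume 0 1 := by
        apply ContinuousOn.intervalIntegrable
        rw [uIcc_of_le zero_le_one]
        exact continuousOn_const.mul ((hslice (pds H) hcS s hsR').pow 2)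
      have i2 : IntervalIntegrable (fun t => 2 * (H (s,t) * pds (pds H) (s,t))) volume 0 1 := by
        apply ContinuousOn.intervalIntegrable
        rw [uIcc_of_le zero_le_one]
        exact continuousOn_const.mul ((hslice H hc s hsR').mul (hslice (pds (pds H)) hcSS s hsR'))
      have e : ∀ t : ℝ, 2 * (pds H (s,t))^2 + 2 * H (s,t) * pds (pds H) (s,t)
          = 2 * (pds H (s,t))^2 + 2 * (H (s,t) * pds (pds H) (s,t)) := fun t => by ring
      simp_rw [e]
      rw [intervalIntegral.integral_add i1 i2, intervalIntegral.integral_const_mul,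
        intervalIntegral.integral_const_mul]
    have hn1 : (0:ℝ) ≤ ∫ t in (0:ℝ)..1, (pds H (s,t))^2 :=
      intervalIntegral.integral_nonneg zero_le_one (fun t _ => sq_nonneg _)
    have hn0 : (0:ℝ) ≤ ∫ t in (0:ℝ)..1, (H (s,t))^2 :=
      intervalIntegral.integral_nonneg zero_le_one (fun t _ => sq_nonneg _)
    rw [hsplit, hHssTt]
    linarith
  -- the comparison argument
  have hφpos : ∀ x : ℝ, 0 < Real.cosh (2*x) := fun x => Real.cosh_pos (2*x)
  have hφd : ∀ x : ℝ, HasDerivAt (fun y => Real.cosh (2*y)) (2 * Real.sinh (2*x)) x := by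
    intro x
    have h0 : HasDerivAt (fun y : ℝ => 2*y) 2 x := by
      simpa using (hasDerivAt_id x).const_mul 2
    have h1 : HasDerivAt (fun y : ℝ => Real.cosh (2*y)) (Real.sinh (2*x) * 2) x :=
      (Real.hasDerivAt_cosh (2*x)).comp x h0
    convert h1 using 1
    ring
  have hψd : ∀ x : ℝ, HasDerivAt (fun y => 2 * Real.sinh (2*y)) (4 * Real.cosh (2*x)) x := by
    intro x
    have h0 : HasDerivAt (fun y : ℝ => 2*y) 2 x := by
      simpa using (hasDerivAt_id x).const_mul 2
    have h1 : HasDerivAt (fun y : ℝ => Real.sinh (2*y)) (Real.cosh (2*x) * 2) x :=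
      (Real.hasDerivAt_sinh (2*x)).comp x h0
    have h2 := h1.const_mul 2
    convert! h2 using 1
    ring
  have hIooIoo : ∀ x : ℝ, x ∈ Ioo (-R) R → x ∈ Ioo (-(R+δ)) (R+δ) := by
    intro x hx
    exact ⟨by linarith [hx.1], by linarith [hx.2]⟩
  -- q is monotone
  have hqd : ∀ x ∈ Ioo (-R) R,
      HasDerivAt (fun y => (∫ t in (0:ℝ)..1, 2 * H (y,t) * pds H (y,t)) * Real.cosh (2*y)
          - (∫ t in (0:ℝ)..1, (H (y,t))^2) * (2 * Real.sinh (2*y)))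
        (((∫ t in (0:ℝ)..1, (2 * (pds H (x,t))^2 + 2 * H (x,t) * pds (pds H) (x,t)))
          - 4 * (∫ t in (0:ℝ)..1, (H (x,t))^2)) * Real.cosh (2*x)) x := by
    intro x hx
    have hx' := hIooIoo x hx
    have h1 := (hE1 x hx').mul (hφd x)
    have h2 := (hE x hx').mul (hψd x)
    have h3 := h1.sub h2
    convert! h3 using 1
    ring
  have hqmono : MonotoneOn (fun y => (∫ t in (0:ℝ)..1, 2 * H (y,t) * pds H (y,t)) * Real.cosh (2*y)
      - (∫ t in (0:ℝ)..1, (H (y,t))^2) * (2 * Real.sinh (2*y))) (Ioo (-R) R) := by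
    apply monotoneOn_of_deriv_nonneg (convex_Ioo _ _)
    · intro x hx
      exact (hqd x hx).continuousAt.continuousWithinAt
    · rw [interior_Ioo]
      intro x hx
      exact (hqd x hx).differentiableAt.differentiableWithinAt
    · rw [interior_Ioo]
      intro x hx
      rw [(hqd x hx).deriv]
      have h4 := hE2ge x (abs_lt.mpr hx)
      exact mul_nonneg (by linarith) (hφpos x).le
  -- u = E/φ and its derivative
  have hud : ∀ x ∈ Ioo (-R) R,
      HasDerivAt (fun y => (∫ t in (0:ℝ)..1, (H (y,t))^2) / Real.cosh (2*y))
        (((∫ t in (0:ℝ)..1, 2 * H (x,t) * pds H (x,t)) * Real.cosh (2*x)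
          - (∫ t in (0:ℝ)..1, (H (x,t))^2) * (2 * Real.sinh (2*x))) / (Real.cosh (2*x))^2) x := by
    intro x hx
    exact (hE x (hIooIoo x hx)).div (hφd x) (ne_of_gt (hφpos x))
  have hucont : ContinuousOn (fun y => (∫ t in (0:ℝ)..1, (H (y,t))^2) / Real.cosh (2*y))
      (Icc (-R) R) := by
    intro x hx
    have hx' : x ∈ Ioo (-(R+δ)) (R+δ) := ⟨by linarith [hx.1], by linarith [hx.2]⟩
    exact (((hE x hx').continuousAt).div
      ((Real.continuous_cosh.comp (continuous_const.mul continuous_id)).continuousAt)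
      (ne_of_gt (hφpos x))).continuousWithinAt
  -- key bound for u
  have hkey : ∀ x ∈ Icc (-R) R, (∫ t in (0:ℝ)..1, (H (x,t))^2) / Real.cosh (2*x)
      ≤ max ((∫ t in (0:ℝ)..1, (H (R,t))^2) / Real.cosh (2*R))
          ((∫ t in (0:ℝ)..1, (H (-R,t))^2) / Real.cosh (2*(-R))) := by
    intro x hx
    rcases eq_or_lt_of_le hx.1 with h1 | h1
    · rw [← h1]
      exact le_max_right _ _
    rcases eq_or_lt_of_le hx.2 with h2 | h2
    · rw [h2]
      exact le_max_left _ _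
    rcases le_total ((∫ t in (0:ℝ)..1, 2 * H (x,t) * pds H (x,t)) * Real.cosh (2*x)
        - (∫ t in (0:ℝ)..1, (H (x,t))^2) * (2 * Real.sinh (2*x))) 0 with hq | hq
    · -- u is antitone on [-R, x]
      have hanti : AntitoneOn (fun y => (∫ t in (0:ℝ)..1, (H (y,t))^2) / Real.cosh (2*y))
          (Icc (-R) x) := by
        apply antitoneOn_of_deriv_nonpos (convex_Icc _ _)
          (hucont.mono (Icc_subset_Icc le_rfl hx.2))
        · rw [interior_Icc]
          intro y hy
          have hy' : y ∈ Ioo (-R) R := ⟨hy.1, lt_trans hy.2 h2⟩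
          exact (hud y hy').differentiableAt.differentiableWithinAt
        · rw [interior_Icc]
          intro y hy
          have hy' : y ∈ Ioo (-R) R := ⟨hy.1, lt_trans hy.2 h2⟩
          rw [(hud y hy').deriv]
          apply div_nonpos_of_nonpos_of_nonneg _ (sq_nonneg _)
          exact le_trans (hqmono hy' ⟨h1, h2⟩ hy.2.le) hq
      have := hanti (left_mem_Icc.mpr hx.1) (right_mem_Icc.mpr hx.1) hx.1
      exact le_trans this (le_max_right _ _)
    · -- u is monotone on [x, R]
      have hmono : MonotoneOn (fun y => (∫ t in (0:ℝ)..1, (H (y,t))^2) / Real.cosh (2*y))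
          (Icc x R) := by
        apply monotoneOn_of_deriv_nonneg (convex_Icc _ _)
          (hucont.mono (Icc_subset_Icc hx.1 le_rfl))
        · rw [interior_Icc]
          intro y hy
          have hy' : y ∈ Ioo (-R) R := ⟨lt_trans h1 hy.1, hy.2⟩
          exact (hud y hy').differentiableAt.differentiableWithinAt
        · rw [interior_Icc]
          intro y hy
          have hy' : y ∈ Ioo (-R) R := ⟨lt_trans h1 hy.1, hy.2⟩
          rw [(hud y hy').deriv]
          apply div_nonneg _ (sq_nonneg _)
          exact le_trans hq (hqmono ⟨h1, h2⟩ hy' hy.1.le)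
      have := hmono (left_mem_Icc.mpr hx.2) (right_mem_Icc.mpr hx.2) hx.2
      exact le_trans this (le_max_left _ _)
  -- conclude
  intro s hs
  have hkey' := hkey s hs
  have hcoshneg : Real.cosh (2*(-R)) = Real.cosh (2*R) := by
    rw [show (2:ℝ)*(-R) = -(2*R) by ring, Real.cosh_neg]
  rw [hcoshneg] at hkey'
  rw [max_div_div_right (hφpos R).le] at hkey'
  rw [div_le_div_iff₀ (hφpos s) (hφpos R)] at hkey'
  rw [div_mul_eq_mul_div, mul_comm]
  rw [le_div_iff₀ (hφpos R)]
  linarith [hkey']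


lemma clamp_dist {x a b d : ℝ} (hab : a ≤ b) (hd : 0 < d) (h1 : a - d < x) (h2 : x < b + d) :
    |x - max a (min x b)| < d := by
  rcases le_total x a with h | h
  · rw [min_eq_left (le_trans h hab), max_eq_left h, abs_lt]
    constructor <;> linarith
  · rcases le_total x b with h' | h'
    · rw [min_eq_left h', max_eq_right h]
      simpa using hd
    · rw [min_eq_right h', max_eq_right hab, abs_lt]
      constructor <;> linarith

lemma exists_tube {R : ℝ} (hR : 0 < R) {U : Set (ℝ × ℝ)} (hU : IsOpen U)
    (hsub : Icc (-R) R ×ˢ Icc (0:ℝ) 1 ⊆ U) :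
    ∃ δ > 0, Ioo (-(R+δ)) (R+δ) ×ˢ Ioo (-δ) (1+δ) ⊆ U := by
  obtain ⟨ε, hε, hthick⟩ := (isCompact_Icc.prod isCompact_Icc).exists_thickening_subset_open hU hsub
  refine ⟨ε/2, by linarith, ?_⟩
  intro p hp
  obtain ⟨hp1, hp2⟩ := mem_prod.mp hp
  apply hthick
  rw [Metric.mem_thickening_iff]
  refine ⟨(max (-R) (min p.1 R), max 0 (min p.2 1)), ?_, ?_⟩
  · apply mem_prod.mpr
    constructor
    · exact ⟨le_max_left _ _, max_le (by linarith) (min_le_right _ _)⟩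
    · exact ⟨le_max_left _ _, max_le (by linarith) (min_le_right _ _)⟩
  · rw [Prod.dist_eq]
    apply max_lt
    · rw [Real.dist_eq]
      exact clamp_dist (by linarith) (by linarith) (by linarith [hp1.1]) (by linarith [hp1.2])
    · rw [Real.dist_eq]
      exact clamp_dist (by linarith) (by linarith) (by linarith [hp2.1]) (by linarith [hp2.2])

lemma sqrt_step {R s A B C : ℝ} (hR : 0 < R)
    (h : A ≤ (Real.cosh (2*s) / Real.cosh (2*R)) * max B C) (hB : 0 ≤ B) (hC : 0 ≤ C) :
    Real.sqrt A ≤ 6 * Real.sqrt (8 * Real.exp (-2*R) * Real.cosh (2*s))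
      * max (Real.sqrt B) (Real.sqrt C) := by
  set m := max (Real.sqrt B) (Real.sqrt C) with hm
  have hm0 : 0 ≤ m := le_trans (Real.sqrt_nonneg B) (le_max_left _ _)
  have hmax : max B C ≤ m^2 := by
    apply max_le
    · calc B = (Real.sqrt B)^2 := (Real.sq_sqrt hB).symm
        _ ≤ m^2 := pow_le_pow_left₀ (Real.sqrt_nonneg B) (le_max_left _ _) 2
    · calc C = (Real.sqrt C)^2 := (Real.sq_sqrt hC).symm
        _ ≤ m^2 := pow_le_pow_left₀ (Real.sqrt_nonneg C) (le_max_right _ _) 2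
  have hcs : 0 < Real.cosh (2*s) := Real.cosh_pos (2*s)
  have hcR : 0 < Real.cosh (2*R) := Real.cosh_pos (2*R)
  have h1 : A ≤ (Real.cosh (2*s) / Real.cosh (2*R)) * m^2 := by
    calc A ≤ (Real.cosh (2*s) / Real.cosh (2*R)) * max B C := h
      _ ≤ (Real.cosh (2*s) / Real.cosh (2*R)) * m^2 :=
        mul_le_mul_of_nonneg_left hmax (div_nonneg hcs.le hcR.le)
  have h2 : Real.sqrt A ≤ Real.sqrt (Real.cosh (2*s) / Real.cosh (2*R)) * m := by
    calc Real.sqrt A ≤ Real.sqrt ((Real.cosh (2*s) / Real.cosh (2*R)) * m^2) :=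
          Real.sqrt_le_sqrt h1
      _ = Real.sqrt (Real.cosh (2*s) / Real.cosh (2*R)) * Real.sqrt (m^2) :=
          Real.sqrt_mul (div_nonneg hcs.le hcR.le) _
      _ = Real.sqrt (Real.cosh (2*s) / Real.cosh (2*R)) * m := by
          rw [Real.sqrt_sq hm0]
  have hC2 : Real.exp (2*R) / 2 ≤ Real.cosh (2*R) := by
    rw [Real.cosh_eq]
    have := (Real.exp_pos (-(2*R))).le
    linarith
  have hce : Real.exp (-2*R) * Real.exp (2*R) = 1 := by
    rw [← Real.exp_add]
    norm_num
  have hep : 0 < Real.exp (-2*R) := Real.exp_pos _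
  have h3 : Real.cosh (2*s) / Real.cosh (2*R) ≤ 36 * (8 * Real.exp (-2*R) * Real.cosh (2*s)) := by
    rw [div_le_iff₀ hcR]
    have key := mul_le_mul_of_nonneg_left hC2
      (show (0:ℝ) ≤ 288 * Real.exp (-2*R) * Real.cosh (2*s) by positivity)
    have key2 : 288 * Real.exp (-2*R) * Real.cosh (2*s) * (Real.exp (2*R)/2)
        = 144 * Real.cosh (2*s) := by
      linear_combination (144 * Real.cosh (2*s)) * hce
    nlinarith [key, key2, hcs]
  have h4 : Real.sqrt (Real.cosh (2*s) / Real.cosh (2*R))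
      ≤ 6 * Real.sqrt (8 * Real.exp (-2*R) * Real.cosh (2*s)) := by
    calc Real.sqrt (Real.cosh (2*s) / Real.cosh (2*R))
        ≤ Real.sqrt (36 * (8 * Real.exp (-2*R) * Real.cosh (2*s))) := Real.sqrt_le_sqrt h3
      _ = Real.sqrt 36 * Real.sqrt (8 * Real.exp (-2*R) * Real.cosh (2*s)) :=
          Real.sqrt_mul (by norm_num) _
      _ = 6 * Real.sqrt (8 * Real.exp (-2*R) * Real.cosh (2*s)) := by
          rw [show (36:ℝ) = 6^2 by norm_num, Real.sqrt_sq (by norm_num : (0:ℝ) ≤ 6)]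
  calc Real.sqrt A ≤ Real.sqrt (Real.cosh (2*s) / Real.cosh (2*R)) * m := h2
    _ ≤ 6 * Real.sqrt (8 * Real.exp (-2*R) * Real.cosh (2*s)) * m :=
        mul_le_mul_of_nonneg_right h4 hm0


/-- Pointwise-in-`s` `L²(S¹)` decay estimate for a harmonic 1-form
`η = f ds + g dt` on the cylinder `[-R,R] × S¹`: with period `P`, co-period `S̃`,
and weight `ρ(s) = (8 e^{-2R} cosh(2s))^{1/2}`, one has
`‖f(s,·)+S̃‖ ≤ 6 ρ(s) max{‖f(±R,·)+S̃‖}` and `‖g(s,·)-P‖ ≤ 6 ρ(s) max{‖g(±R,·)-P‖}`. -/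
theorem harmonic_cylinder_L2_slice_estimate
    (R : ℝ) (hR : 0 < R) (f g : ℝ → ℝ → ℝ)
    (U : Set (ℝ × ℝ)) (hU : IsOpen U)
    (hUsub : {p : ℝ × ℝ | |p.1| ≤ R} ⊆ U)
    (hf : ContDiffOn ℝ (⊤ : ℕ∞) (fun p : ℝ × ℝ => f p.1 p.2) U)
    (hg : ContDiffOn ℝ (⊤ : ℕ∞) (fun p : ℝ × ℝ => g p.1 p.2) U)
    (hCR₁ : ∀ p ∈ U, deriv (fun s => f s p.2) p.1 = -deriv (fun t => g p.1 t) p.2)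
    (hCR₂ : ∀ p ∈ U, deriv (fun t => f p.1 t) p.2 = deriv (fun s => g s p.2) p.1)
    (hfper : ∀ s t : ℝ, |s| ≤ R → f s (t + 1) = f s t)
    (hgper : ∀ s t : ℝ, |s| ≤ R → g s (t + 1) = g s t)
    (P S : ℝ)
    (hP : P = ∫ t in (0 : ℝ)..1, g 0 t)
    (hS : S = -∫ t in (0 : ℝ)..1, f 0 t)
    (ρ : ℝ → ℝ)
    (hρ : ∀ s, ρ s = Real.sqrt (8 * Real.exp (-2 * R) * Real.cosh (2 * s))) :
    ∀ s ∈ Set.Icc (-R) R,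
      Real.sqrt (∫ t in (0 : ℝ)..1, (f s t + S) ^ 2) ≤
        6 * ρ s * max (Real.sqrt (∫ t in (0 : ℝ)..1, (f R t + S) ^ 2))
          (Real.sqrt (∫ t in (0 : ℝ)..1, (f (-R) t + S) ^ 2)) ∧
      Real.sqrt (∫ t in (0 : ℝ)..1, (g s t - P) ^ 2) ≤
        6 * ρ s * max (Real.sqrt (∫ t in (0 : ℝ)..1, (g R t - P) ^ 2))
          (Real.sqrt (∫ t in (0 : ℝ)..1, (g (-R) t - P) ^ 2)) := by
  set F := fun p : ℝ × ℝ => f p.1 p.2 with hFdef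
  set G := fun p : ℝ × ℝ => g p.1 p.2 with hGdef
  have hstrip : ∀ s t : ℝ, |s| ≤ R → (s, t) ∈ U := fun s t hs => hUsub hs
  -- tube around the compact cylinder
  obtain ⟨δ, hδ, hVU⟩ := exists_tube hR hU (by
    intro p hp
    obtain ⟨hp1, _⟩ := mem_prod.mp hp
    exact hUsub (abs_le.mpr hp1))
  have hdF : ∀ p ∈ U, DifferentiableAt ℝ F p := fun p hp =>
    ((hf p hp).contDiffAt (hU.mem_nhds hp)).differentiableAt (by simp)
  have hdG : ∀ p ∈ U, DifferentiableAt ℝ G p := fun p hp =>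
    ((hg p hp).contDiffAt (hU.mem_nhds hp)).differentiableAt (by simp)
  -- Cauchy-Riemann in partial-derivative form
  have hCR1' : ∀ p ∈ U, pds F p = - pdt G p := by
    intro p hp
    have e1 : deriv (fun s => F (s, p.2)) p.1 = pds F p := (hasDerivAt_pds (hdF p hp)).deriv
    have e2 : deriv (fun t => G (p.1, t)) p.2 = pdt G p := (hasDerivAt_pdt (hdG p hp)).deriv
    rw [← e1, ← e2]
    exact hCR₁ p hp
  have hCR2' : ∀ p ∈ U, pdt F p = pds G p := by
    intro p hp
    have e1 : deriv (fun t => F (p.1, t)) p.2 = pdt F p := (hasDerivAt_pdt (hdF p hp)).deriv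
    have e2 : deriv (fun s => G (s, p.2)) p.1 = pds G p := (hasDerivAt_pds (hdG p hp)).deriv
    rw [← e1, ← e2]
    exact hCR₂ p hp
  -- harmonicity
  have hharmF : ∀ p ∈ U, pds (pds F) p = - pdt (pdt F) p := by
    intro p hp
    have hev1 : pds F =ᶠ[nhds p] (fun q => -(pdt G q)) := by
      filter_upwards [hU.mem_nhds hp] with q hq
      exact hCR1' q hq
    have hev2 : pds G =ᶠ[nhds p] (fun q => pdt F q) := by
      filter_upwards [hU.mem_nhds hp] with q hq
      exact (hCR2' q hq).symm
    calc pds (pds F) p = fderiv ℝ (fun q => -(pdt G q)) p (1,0) := by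
          show fderiv ℝ (pds F) p (1,0) = _
          rw [hev1.fderiv_eq]
      _ = - pds (pdt G) p := by
          rw [fderiv_fun_neg]
          show (-(fderiv ℝ (pdt G) p)) (1,0) = _
          rw [ContinuousLinearMap.neg_apply]
          rfl
      _ = - pdt (pds G) p := by rw [schwarz_swap hU hg hp]
      _ = - pdt (pdt F) p := by
          show -(fderiv ℝ (pds G) p (0,1)) = -(fderiv ℝ (pdt F) p (0,1))
          rw [hev2.fderiv_eq]
  have hharmG : ∀ p ∈ U, pds (pds G) p = - pdt (pdt G) p := by
    intro p hp
    have hev1 : pds G =ᶠ[nhds p] (fun q => pdt F q) := by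
      filter_upwards [hU.mem_nhds hp] with q hq
      exact (hCR2' q hq).symm
    have hev2 : pds F =ᶠ[nhds p] (fun q => -(pdt G q)) := by
      filter_upwards [hU.mem_nhds hp] with q hq
      exact hCR1' q hq
    calc pds (pds G) p = fderiv ℝ (fun q => pdt F q) p (1,0) := by
          show fderiv ℝ (pds G) p (1,0) = _
          rw [hev1.fderiv_eq]
      _ = pds (pdt F) p := rfl
      _ = pdt (pds F) p := schwarz_swap hU hf hp
      _ = fderiv ℝ (fun q => -(pdt G q)) p (0,1) := by
          show fderiv ℝ (pds F) p (0,1) = _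
          rw [hev2.fderiv_eq]
      _ = - pdt (pdt G) p := by
          rw [fderiv_fun_neg]
          show (-(fderiv ℝ (pdt G) p)) (0,1) = _
          rw [ContinuousLinearMap.neg_apply]
          rfl
  -- periodicity of t-derivative slices
  have hperT : ∀ (Φ : ℝ × ℝ → ℝ), (∀ p ∈ U, DifferentiableAt ℝ Φ p) →
      (∀ s t : ℝ, |s| ≤ R → Φ (s, t+1) = Φ (s,t)) →
      ∀ s : ℝ, |s| ≤ R → pdt Φ (s,1) = pdt Φ (s,0) := by
    intro Φ hdΦ hper s hs
    have e1 : pdt Φ (s,(1:ℝ)) = deriv (fun t => Φ (s,t)) 1 :=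
      ((hasDerivAt_pdt (hdΦ _ (hstrip s 1 hs))).deriv).symm
    have e0 : pdt Φ (s,(0:ℝ)) = deriv (fun t => Φ (s,t)) 0 :=
      ((hasDerivAt_pdt (hdΦ _ (hstrip s 0 hs))).deriv).symm
    have hfun : (fun t => Φ (s, t+1)) = (fun t => Φ (s,t)) := funext fun t => hper s t hs
    have e2 : deriv (fun t => Φ (s, t+1)) 0 = deriv (fun t => Φ (s,t)) (0+1) :=
      deriv_comp_add_const (fun t => Φ (s,t)) 1 0
    rw [hfun] at e2
    norm_num at e2
    rw [e1, e0]
    exact e2.symm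
  -- FTC helper for slices
  have hftcT : ∀ (Φ : ℝ × ℝ → ℝ), ContDiffOn ℝ (⊤ : ℕ∞) Φ U → ∀ x : ℝ, |x| ≤ R →
      (∫ t in (0:ℝ)..1, pdt Φ (x,t)) = Φ (x,1) - Φ (x,0) := by
    intro Φ hΦ x hx
    have h1 : ∀ t ∈ uIcc (0:ℝ) 1, HasDerivAt (fun t' => Φ (x,t')) (pdt Φ (x,t)) t := by
      intro t _
      exact hasDerivAt_pdt (((hΦ _ (hstrip x t hx)).contDiffAt
        (hU.mem_nhds (hstrip x t hx))).differentiableAt (by simp))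
    have h2 : IntervalIntegrable (fun t => pdt Φ (x,t)) volume 0 1 := by
      apply ContinuousOn.intervalIntegrable
      exact ((contDiffOn_pdt hU hΦ).continuousOn.comp
        (continuous_const.prodMk continuous_id).continuousOn (fun t _ => hstrip x t hx))
    exact intervalIntegral.integral_eq_sub_of_hasDerivAt (f := fun t => Φ (x,t)) h1 h2
  -- mean-zero: the s-derivative of the slice mean vanishes
  have hVopen : IsOpen (Ioo (-(R+δ)) (R+δ) ×ˢ Ioo (-δ) (1+δ)) := isOpen_Ioo.prod isOpen_Ioo
  have hmeanconst : ∀ (Φ Ψ : ℝ × ℝ → ℝ), ContDiffOn ℝ (⊤ : ℕ∞) Φ U → ContDiffOn ℝ (⊤ : ℕ∞) Ψ U →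
      (∀ p ∈ U, pds Φ p = pdt Ψ p) →
      (∀ s t : ℝ, |s| ≤ R → Ψ (s, t+1) = Ψ (s,t)) →
      ∀ x : ℝ, |x| ≤ R → (∫ t in (0:ℝ)..1, Φ (x,t)) = ∫ t in (0:ℝ)..1, Φ (0,t) := by
    intro Φ Ψ hΦ hΨ hcr hper x hx
    have hmd : ∀ s₀ ∈ Ioo (-(R+δ)) (R+δ),
        HasDerivAt (fun y => ∫ t in (0:ℝ)..1, Φ (y,t)) (∫ t in (0:ℝ)..1, pds Φ (s₀,t)) s₀ := by
      intro s₀ hs₀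
      exact hasDerivAt_param (by linarith) (by linarith)
        ((hΦ.mono hVU).continuousOn)
        ((contDiffOn_pds hVopen (hΦ.mono hVU)).continuousOn)
        (fun p hp => hasDerivAt_pds (((hΦ _ (hVU hp)).contDiffAt
          (hU.mem_nhds (hVU hp))).differentiableAt (by simp))) hs₀
    have hm0 : ∀ y : ℝ, |y| ≤ R → (∫ t in (0:ℝ)..1, pds Φ (y,t)) = 0 := by
      intro y hy
      have hcongr : ∀ t ∈ uIcc (0:ℝ) 1, pds Φ (y,t) = pdt Ψ (y,t) :=
        fun t _ => hcr (y,t) (hstrip y t hy)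
      rw [intervalIntegral.integral_congr hcongr, hftcT Ψ hΨ y hy]
      have := hper y 0 hy
      rw [zero_add] at this
      rw [this]
      ring
    have habs : ∀ y x' : ℝ, 0 ≤ y → y ≤ x' → |x'| ≤ R → |y| ≤ R := by
      intro y x' h0 hyx hx'
      rw [abs_le]
      have := abs_le.mp hx'
      constructor <;> linarith [this.1, this.2]
    rcases le_total 0 x with h | h
    · exact constant_of_has_deriv_right_zero
        (fun y hy => (hmd y (by
          have := abs_le.mp hx
          exact ⟨by linarith [hy.1], by linarith [hy.2, this.2]⟩)).continuousAt.continuousWithinAt)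
        (fun y hy => by
          have hyR : |y| ≤ R := habs y x hy.1 hy.2.le hx
          have h0 := hmd y (by
            have := abs_le.mp hyR
            exact ⟨by linarith [this.1], by linarith [this.2]⟩)
          rw [hm0 y hyR] at h0
          exact h0.hasDerivWithinAt) x (right_mem_Icc.mpr h)
    · have habs' : ∀ y : ℝ, x ≤ y → y ≤ 0 → |y| ≤ R := by
        intro y h1 h2
        rw [abs_le]
        have := abs_le.mp hx
        constructor <;> linarith [this.1]
      have := constant_of_has_deriv_right_zero (f := fun y => ∫ t in (0:ℝ)..1, Φ (y,t))
        (a := x) (b := 0)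
        (fun y hy => (hmd y (by
          have := abs_le.mp (habs' y hy.1 hy.2)
          exact ⟨by linarith [this.1], by linarith [this.2]⟩)).continuousAt.continuousWithinAt)
        (fun y hy => by
          have hyR : |y| ≤ R := habs' y hy.1 hy.2.le
          have h0 := hmd y (by
            have := abs_le.mp hyR
            exact ⟨by linarith [this.1], by linarith [this.2]⟩)
          rw [hm0 y hyR] at h0
          exact h0.hasDerivWithinAt) 0 (right_mem_Icc.mpr h)
      exact this.symm
  -- data for Hf := F + S
  have hnegG : ∀ q : ℝ × ℝ, pdt (fun q => -(G q)) q = -(pdt G q) := by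
    intro q
    show fderiv ℝ (fun q => -(G q)) q (0,1) = _
    rw [fderiv_fun_neg, ContinuousLinearMap.neg_apply]
    rfl
  have hpds_f : pds (fun p : ℝ × ℝ => F p + S) = pds F := by
    funext q
    show fderiv ℝ (fun p => F p + S) q (1,0) = fderiv ℝ F q (1,0)
    rw [fderiv_add_const]
  have hpdt_f : pdt (fun p : ℝ × ℝ => F p + S) = pdt F := by
    funext q
    show fderiv ℝ (fun p => F p + S) q (0,1) = fderiv ℝ F q (0,1)
    rw [fderiv_add_const]
  have hpds_g : pds (fun p : ℝ × ℝ => G p - P) = pds G := by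
    funext q
    show fderiv ℝ (fun p => G p - P) q (1,0) = fderiv ℝ G q (1,0)
    rw [fderiv_sub_const]
  have hpdt_g : pdt (fun p : ℝ × ℝ => G p - P) = pdt G := by
    funext q
    show fderiv ℝ (fun p => G p - P) q (0,1) = fderiv ℝ G q (0,1)
    rw [fderiv_sub_const]
  -- slice integrability
  have hiF : ∀ x : ℝ, |x| ≤ R → IntervalIntegrable (fun t => F (x,t)) volume 0 1 := by
    intro x hx
    apply ContinuousOn.intervalIntegrable
    exact (hf.continuousOn.comp (continuous_const.prodMk continuous_id).continuousOn
      (fun t _ => hstrip x t hx))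
  have hiG : ∀ x : ℝ, |x| ≤ R → IntervalIntegrable (fun t => G (x,t)) volume 0 1 := by
    intro x hx
    apply ContinuousOn.intervalIntegrable
    exact (hg.continuousOn.comp (continuous_const.prodMk continuous_id).continuousOn
      (fun t _ => hstrip x t hx))
  -- mean values
  have hmF : ∀ x : ℝ, |x| ≤ R → (∫ t in (0:ℝ)..1, F (x,t)) = -S := by
    intro x hx
    have hcr : ∀ p ∈ U, pds F p = pdt (fun q => -(G q)) p := by
      intro p hp
      rw [hnegG p, hCR1' p hp]
    have hper : ∀ s t : ℝ, |s| ≤ R → -(G (s, t+1)) = -(G (s,t)) := by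
      intro s t hs
      have : g s (t+1) = g s t := hgper s t hs
      show -(g s (t+1)) = -(g s t)
      rw [this]
    have h0 := hmeanconst F (fun q => -(G q)) hf hg.neg hcr hper x hx
    have h1 : (∫ t in (0:ℝ)..1, F (0,t)) = ∫ t in (0:ℝ)..1, f 0 t := rfl
    rw [h0, h1, hS, neg_neg]
  have hmG : ∀ x : ℝ, |x| ≤ R → (∫ t in (0:ℝ)..1, G (x,t)) = P := by
    intro x hx
    have hcr : ∀ p ∈ U, pds G p = pdt F p := fun p hp => (hCR2' p hp).symm
    have hper : ∀ s t : ℝ, |s| ≤ R → F (s, t+1) = F (s,t) := fun s t hs => hfper s t hs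
    have h0 := hmeanconst G F hg hf hcr hper x hx
    have h1 : (∫ t in (0:ℝ)..1, G (0,t)) = ∫ t in (0:ℝ)..1, g 0 t := rfl
    rw [h0, h1, ← hP]
  -- energy decay for f + S
  have hEf := energy_decay hR hδ (H := fun p : ℝ × ℝ => F p + S)
    ((hf.mono hVU).add contDiffOn_const)
    (by
      intro p hp
      rw [hpds_f, hpdt_f]
      exact hharmF p (hVU hp))
    (by
      intro x hx
      have := hfper x 0 hx
      rw [zero_add] at this
      show F (x,1) + S = F (x,0) + S
      show f x 1 + S = f x 0 + S
      rw [this])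
    (by
      intro x hx
      rw [hpdt_f]
      exact hperT F hdF (fun s t hs => hfper s t hs) x hx)
    (by
      intro x hx
      have h2 : (∫ t in (0:ℝ)..1, (F (x,t) + S)) = (∫ t in (0:ℝ)..1, F (x,t)) + S := by
        rw [intervalIntegral.integral_add (hiF x hx.le) intervalIntegrable_const,
          intervalIntegral.integral_const]
        simp
      rw [h2, hmF x hx.le]
      ring)
  -- energy decay for g - P
  have hEg := energy_decay hR hδ (H := fun p : ℝ × ℝ => G p - P)
    ((hg.mono hVU).sub contDiffOn_const)
    (by
      intro p hp
      rw [hpds_g, hpdt_g]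
      exact hharmG p (hVU hp))
    (by
      intro x hx
      have := hgper x 0 hx
      rw [zero_add] at this
      show G (x,1) - P = G (x,0) - P
      show g x 1 - P = g x 0 - P
      rw [this])
    (by
      intro x hx
      rw [hpdt_g]
      exact hperT G hdG (fun s t hs => hgper s t hs) x hx)
    (by
      intro x hx
      have h2 : (∫ t in (0:ℝ)..1, (G (x,t) - P)) = (∫ t in (0:ℝ)..1, G (x,t)) - P := by
        rw [intervalIntegral.integral_sub (hiG x hx.le) intervalIntegrable_const,
          intervalIntegral.integral_const]
        simp
      rw [h2, hmG x hx.le]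
      ring)
  -- conclusion
  intro s hs
  have hnn : ∀ (u : ℝ → ℝ), (0:ℝ) ≤ ∫ t in (0:ℝ)..1, (u t)^2 :=
    fun u => intervalIntegral.integral_nonneg zero_le_one (fun t _ => sq_nonneg _)
  constructor
  · rw [hρ s]
    exact sqrt_step hR (hEf s hs) (hnn (fun t => f R t + S)) (hnn (fun t => f (-R) t + S))
  · rw [hρ s]
    exact sqrt_step hR (hEg s hs) (hnn (fun t => g R t - P)) (hnn (fun t => g (-R) t - P))
end Harm
end

section
/- Let R > 0 and let f, g be smooth functions, 1-periodic in t, defined on an open neighbourhood of {s+it : |s| ≤ R} and satisfying there ∂_s f = −∂_t g and ∂_t f = ∂_s g (equivalently, F := f − ig is holomorphic in z = s+it), with period P := ∫₀¹ g(0,t) dt and co-period S̃ := −∫₀¹ f(0,t) dt. Then ∫_{−R}^{R} ∫₀¹ (f(s,t) + S̃)² dt ds ≤ 144 · max{∫₀¹ (f(R,t) + S̃)² dt, ∫₀¹ (f(−R,t) + S̃)² dt} and ∫_{−R}^{R} ∫₀¹ (g(s,t) − P)² dt ds ≤ 144 · max{∫₀¹ (g(R,t) − P)² dt, ∫₀¹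 (g(−R,t) − P)² dt}. -/
open MeasureTheory

namespace HarmCylAux

open Set Filter intervalIntegral
open scoped ContDiff


noncomputable def pd1 (φ : ℝ × ℝ → ℝ) (p : ℝ × ℝ) : ℝ := fderiv ℝ φ p (1, 0)
noncomputable def pd2 (φ : ℝ × ℝ → ℝ) (p : ℝ × ℝ) : ℝ := fderiv ℝ φ p (0, 1)

variable {U : Set (ℝ × ℝ)}

lemma contDiffOn_pd1 (hU : IsOpen U) {φ : ℝ × ℝ → ℝ} (hφ : ContDiffOn ℝ ∞ φ U) :
    ContDiffOn ℝ ∞ (pd1 φ) U :=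
  (hφ.fderiv_of_isOpen hU (le_of_eq rfl)).clm_apply contDiffOn_const

lemma contDiffOn_pd2 (hU : IsOpen U) {φ : ℝ × ℝ → ℝ} (hφ : ContDiffOn ℝ ∞ φ U) :
    ContDiffOn ℝ ∞ (pd2 φ) U :=
  (hφ.fderiv_of_isOpen hU (le_of_eq rfl)).clm_apply contDiffOn_const

lemma hasDerivAt_slice1 (hU : IsOpen U) {φ : ℝ × ℝ → ℝ} (hφ : ContDiffOn ℝ ∞ φ U)
    {p : ℝ × ℝ} (hp : p ∈ U) :
    HasDerivAt (fun s => φ (s, p.2)) (pd1 φ p) p.1 := by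
  obtain ⟨x, y⟩ := p
  have hd : DifferentiableAt ℝ φ (x, y) :=
    (hφ.differentiableOn (by simp)).differentiableAt
      (hU.mem_nhds hp)
  have h1 : HasDerivAt (fun s : ℝ => ((s, y) : ℝ × ℝ)) ((1 : ℝ), (0 : ℝ)) x :=
    (hasDerivAt_id x).prodMk (hasDerivAt_const x y)
  exact hd.hasFDerivAt.comp_hasDerivAt x h1

lemma hasDerivAt_slice2 (hU : IsOpen U) {φ : ℝ × ℝ → ℝ} (hφ : ContDiffOn ℝ ∞ φ U)
    {p : ℝ × ℝ} (hp : p ∈ U) :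
    HasDerivAt (fun t => φ (p.1, t)) (pd2 φ p) p.2 := by
  obtain ⟨x, y⟩ := p
  have hd : DifferentiableAt ℝ φ (x, y) :=
    (hφ.differentiableOn (by simp)).differentiableAt
      (hU.mem_nhds hp)
  have h1 : HasDerivAt (fun t : ℝ => ((x, t) : ℝ × ℝ)) ((0 : ℝ), (1 : ℝ)) y :=
    (hasDerivAt_const y x).prodMk (hasDerivAt_id y)
  exact hd.hasFDerivAt.comp_hasDerivAt y h1

lemma pd_swap (hU : IsOpen U) {φ : ℝ × ℝ → ℝ} (hφ : ContDiffOn ℝ ∞ φ U)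
    {p : ℝ × ℝ} (hp : p ∈ U) :
    pd1 (pd2 φ) p = pd2 (pd1 φ) p := by
  set Φ := fderiv ℝ φ with hΦdef
  have hdiff : DifferentiableOn ℝ φ U :=
    hφ.differentiableOn (by simp)
  have hΦ : ContDiffOn ℝ ∞ Φ U := hφ.fderiv_of_isOpen hU (le_of_eq rfl)
  have hΦp : HasFDerivAt Φ (fderiv ℝ Φ p) p :=
    ((hΦ.differentiableOn (by simp)).differentiableAt
      (hU.mem_nhds hp)).hasFDerivAt
  have hev : ∀ᶠ y in nhds p, HasFDerivAt φ (Φ y) y := by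
    filter_upwards [hU.mem_nhds hp] with y hy
    exact (hdiff.differentiableAt (hU.mem_nhds hy)).hasFDerivAt
  have hsym := second_derivative_symmetric_of_eventually hev hΦp (1, 0) (0, 1)
  have h2 : ∀ v w : ℝ × ℝ, fderiv ℝ (fun q => Φ q w) p v = (fderiv ℝ Φ p v) w := by
    intro v w
    have h : HasFDerivAt (fun q => Φ q w)
        ((ContinuousLinearMap.apply ℝ ℝ w).comp (fderiv ℝ Φ p)) p :=
      (ContinuousLinearMap.apply ℝ ℝ w).hasFDerivAt.comp p hΦp
    rw [h.fderiv]; rfl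
  show fderiv ℝ (fun q => Φ q (0, 1)) p (1, 0) = fderiv ℝ (fun q => Φ q (1, 0)) p (0, 1)
  rw [h2, h2]
  exact hsym

lemma hasDerivAt_param (hU : IsOpen U) {φ ψ : ℝ × ℝ → ℝ}
    (hφ : ContinuousOn φ U) (hψ : ContinuousOn ψ U)
    (hd : ∀ p ∈ U, HasDerivAt (fun s => φ (s, p.2)) (ψ p) p.1)
    {s₀ : ℝ} (hs : ∀ t ∈ Icc (0 : ℝ) 1, ((s₀, t) : ℝ × ℝ) ∈ U) :
    HasDerivAt (fun s => ∫ t in (0 : ℝ)..1, φ (s, t)) (∫ t in (0 : ℝ)..1, ψ (s₀, t)) s₀ := by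
  have hK : IsCompact ({s₀} ×ˢ Icc (0 : ℝ) 1) := isCompact_singleton.prod isCompact_Icc
  have hKU : ({s₀} ×ˢ Icc (0 : ℝ) 1) ⊆ U := by
    rintro ⟨a, b⟩ ⟨ha, hb⟩
    simp only [mem_singleton_iff] at ha
    subst ha; exact hs b hb
  obtain ⟨δ, δpos, hδ⟩ := hK.exists_thickening_subset_open hU hKU
  have hball : ∀ x ∈ Metric.ball s₀ δ, ∀ t ∈ Icc (0 : ℝ) 1, ((x, t) : ℝ × ℝ) ∈ U := by
    intro x hx t ht
    apply hδ
    rw [Metric.mem_thickening_iff]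
    refine ⟨(s₀, t), ⟨rfl, ht⟩, ?_⟩
    rw [Prod.dist_eq]
    simp only [dist_self]
    exact max_lt (Metric.mem_ball.mp hx) δpos
  have hK'U : Metric.closedBall s₀ (δ / 2) ×ˢ Icc (0 : ℝ) 1 ⊆ U := by
    rintro ⟨a, b⟩ ⟨ha, hb⟩
    exact hball a (Metric.closedBall_subset_ball (by linarith) ha) b hb
  obtain ⟨C, hC⟩ := ((isCompact_closedBall s₀ (δ / 2)).prod isCompact_Icc).exists_bound_of_continuousOn (hψ.mono hK'U)
  have hIoc : Set.uIoc (0 : ℝ) 1 ⊆ Icc (0 : ℝ) 1 := by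
    rw [uIoc_of_le zero_le_one]; exact Ioc_subset_Icc_self
  have slicecont : ∀ x ∈ Metric.ball s₀ δ, ∀ (χ : ℝ × ℝ → ℝ), ContinuousOn χ U →
      ContinuousOn (fun t => χ (x, t)) (Icc (0 : ℝ) 1) := by
    intro x hx χ hχ
    exact hχ.comp ((continuous_const.prodMk continuous_id).continuousOn)
      (fun t ht => hball x hx t ht)
  have hs₀ball : s₀ ∈ Metric.ball s₀ δ := Metric.mem_ball_self δpos
  have res := intervalIntegral.hasDerivAt_integral_of_dominated_loc_of_deriv_le
    (F := fun x t => φ (x, t)) (F' := fun x t => ψ (x, t)) (x₀ := s₀)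
    (a := (0:ℝ)) (b := 1) (μ := volume) (bound := fun _ => C)
    (Metric.ball_mem_nhds s₀ (half_pos δpos))
    ?_ ?_ ?_ ?_ ?_ ?_
  · exact res.2
  · filter_upwards [Metric.ball_mem_nhds s₀ δpos] with x hx
    exact ((slicecont x hx φ hφ).mono hIoc).aestronglyMeasurable measurableSet_uIoc
  · exact ((slicecont s₀ hs₀ball φ hφ).mono (by rw [uIcc_of_le zero_le_one])).intervalIntegrable
  · exact ((slicecont s₀ hs₀ball ψ hψ).mono hIoc).aestronglyMeasurable measurableSet_uIoc
  · refine Eventually.of_forall (fun t ht x hx => ?_)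
    exact hC (x, t) ⟨Metric.ball_subset_closedBall hx, hIoc ht⟩
  · exact intervalIntegrable_const
  · refine Eventually.of_forall (fun t ht x hx => ?_)
    exact hd (x, t) (hball x (Metric.ball_subset_ball (by linarith) hx) t (hIoc ht))

variable {U : Set (ℝ × ℝ)}

lemma main_estimate (R : ℝ) (hR : 0 < R) (f g : ℝ → ℝ → ℝ)
    (U : Set (ℝ × ℝ)) (hU : IsOpen U)
    (hUsub : {p : ℝ × ℝ | |p.1| ≤ R} ⊆ U)
    (hf : ContDiffOn ℝ ∞ (fun p : ℝ × ℝ => f p.1 p.2) U)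
    (hg : ContDiffOn ℝ ∞ (fun p : ℝ × ℝ => g p.1 p.2) U)
    (hCR₁ : ∀ p ∈ U, deriv (fun s => f s p.2) p.1 = -deriv (fun t => g p.1 t) p.2)
    (hCR₂ : ∀ p ∈ U, deriv (fun t => f p.1 t) p.2 = deriv (fun s => g s p.2) p.1)
    (hfper : ∀ s t : ℝ, |s| ≤ R → f s (t + 1) = f s t)
    (hgper : ∀ s t : ℝ, |s| ≤ R → g s (t + 1) = g s t)
    (S : ℝ) (hS : S = -∫ t in (0 : ℝ)..1, f 0 t) :
    (∫ s in (-R)..R, ∫ t in (0 : ℝ)..1, (f s t + S) ^ 2) ≤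
      144 * max (∫ t in (0 : ℝ)..1, (f R t + S) ^ 2)
        (∫ t in (0 : ℝ)..1, (f (-R) t + S) ^ 2) := by
  have hRR : -R ≤ R := by linarith
  set F : ℝ × ℝ → ℝ := fun p => f p.1 p.2 with hFdef
  set G : ℝ × ℝ → ℝ := fun p => g p.1 p.2 with hGdef
  have hmem : ∀ s : ℝ, |s| ≤ R → ∀ t : ℝ, ((s, t) : ℝ × ℝ) ∈ U := fun s hs t => hUsub hs
  have hF1s : ContDiffOn ℝ ∞ (pd1 F) U := contDiffOn_pd1 hU hf
  have hF2s : ContDiffOn ℝ ∞ (pd2 F) U := contDiffOn_pd2 hU hf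
  have hF11s : ContDiffOn ℝ ∞ (pd1 (pd1 F)) U := contDiffOn_pd1 hU hF1s
  have hF22s : ContDiffOn ℝ ∞ (pd2 (pd2 F)) U := contDiffOn_pd2 hU hF2s
  have hF111s : ContDiffOn ℝ ∞ (pd1 (pd1 (pd1 F))) U := contDiffOn_pd1 hU hF11s
  have hG1s : ContDiffOn ℝ ∞ (pd1 G) U := contDiffOn_pd1 hU hg
  have hG2s : ContDiffOn ℝ ∞ (pd2 G) U := contDiffOn_pd2 hU hg
  -- continuity of slices
  have sliceCont : ∀ (χ : ℝ × ℝ → ℝ), ContinuousOn χ U → ∀ s : ℝ, |s| ≤ R →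
      Continuous (fun t => χ (s, t)) := by
    intro χ hχ s hs
    rw [continuous_iff_continuousAt]
    intro t
    exact (hχ.continuousAt (hU.mem_nhds (hmem s hs t))).comp
      ((continuous_const.prodMk continuous_id).continuousAt)
  -- Cauchy-Riemann in pd form
  have cr1 : ∀ p ∈ U, pd1 F p = -(pd2 G p) := by
    intro p hp
    have h := hCR₁ p hp
    rwa [(hasDerivAt_slice1 hU hf hp).deriv, (hasDerivAt_slice2 hU hg hp).deriv] at h
  have cr2 : ∀ p ∈ U, pd2 F p = pd1 G p := by
    intro p hp
    have h := hCR₂ p hp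
    rwa [(hasDerivAt_slice2 hU hf hp).deriv, (hasDerivAt_slice1 hU hg hp).deriv] at h
  -- harmonicity of f
  have laplace : ∀ p ∈ U, pd1 (pd1 F) p = -(pd2 (pd2 F) p) := by
    intro p hp
    have h1 : pd1 F =ᶠ[nhds p] fun q => -(pd2 G q) :=
      eventually_of_mem (hU.mem_nhds hp) (fun q hq => cr1 q hq)
    have e1 : pd1 (pd1 F) p = -(pd1 (pd2 G) p) := by
      show fderiv ℝ (pd1 F) p (1, 0) = -(fderiv ℝ (pd2 G) p (1, 0))
      rw [h1.fderiv_eq, fderiv_fun_neg]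
      rfl
    have h2 : pd1 G =ᶠ[nhds p] pd2 F :=
      eventually_of_mem (hU.mem_nhds hp) (fun q hq => (cr2 q hq).symm)
    have e2 : pd2 (pd1 G) p = pd2 (pd2 F) p := by
      show fderiv ℝ (pd1 G) p (0, 1) = fderiv ℝ (pd2 F) p (0, 1)
      rw [h2.fderiv_eq]
    rw [e1, pd_swap hU hg hp, e2]
  -- periodicity of F2
  have perF2 : ∀ s : ℝ, |s| ≤ R → pd2 F (s, 1) = pd2 F (s, 0) := by
    intro s hs
    have h1 := (hasDerivAt_slice2 hU hf (hmem s hs 1)).deriv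
    have h0 := (hasDerivAt_slice2 hU hf (hmem s hs 0)).deriv
    have heq : (fun t => f s (t + 1)) = fun t => f s t := funext fun t => hfper s t hs
    calc pd2 F (s, 1) = deriv (fun t => f s t) 1 := h1.symm
      _ = deriv (fun t => f s (t + 1)) 0 := by rw [deriv_comp_add_const]; norm_num
      _ = deriv (fun t => f s t) 0 := by rw [heq]
      _ = pd2 F (s, 0) := h0
  -- the energy and its derivatives
  set E : ℝ → ℝ := fun s => ∫ t in (0:ℝ)..1, (F (s, t) + S) ^ 2 with hEdef
  set E1 : ℝ → ℝ := fun s => ∫ t in (0:ℝ)..1, 2 * ((F (s, t) + S) * pd1 F (s, t)) with hE1def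
  set E2 : ℝ → ℝ := fun s =>
    ∫ t in (0:ℝ)..1, 2 * (pd1 F (s, t) ^ 2 + (F (s, t) + S) * pd1 (pd1 F) (s, t)) with hE2def
  have hEd : ∀ s : ℝ, |s| ≤ R → HasDerivAt E (E1 s) s := by
    intro s hs
    refine hasDerivAt_param hU (φ := fun p => (F p + S) ^ 2)
      (ψ := fun p => 2 * ((F p + S) * pd1 F p)) ?_ ?_ ?_ (fun t _ => hmem s hs t)
    · exact (hf.continuousOn.add continuousOn_const).pow 2
    · exact continuousOn_const.mul ((hf.continuousOn.add continuousOn_const).mul hF1s.continuousOn)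
    · rintro ⟨x, y⟩ hp
      have h := ((hasDerivAt_slice1 hU hf hp).add_const S).fun_pow 2
      refine h.congr_deriv ?_
      push_cast
      ring
  have hE1d : ∀ s : ℝ, |s| ≤ R → HasDerivAt E1 (E2 s) s := by
    intro s hs
    refine hasDerivAt_param hU (φ := fun p => 2 * ((F p + S) * pd1 F p))
      (ψ := fun p => 2 * (pd1 F p ^ 2 + (F p + S) * pd1 (pd1 F) p)) ?_ ?_ ?_ (fun t _ => hmem s hs t)
    · exact continuousOn_const.mul ((hf.continuousOn.add continuousOn_const).mul hF1s.continuousOn)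
    · exact continuousOn_const.mul ((hF1s.continuousOn.pow 2).add
        ((hf.continuousOn.add continuousOn_const).mul hF11s.continuousOn))
    · rintro ⟨x, y⟩ hp
      have h := (((hasDerivAt_slice1 hU hf hp).add_const S).fun_mul
        (hasDerivAt_slice1 hU hF1s hp)).const_mul 2
      refine h.congr_deriv ?_
      ring
  have hE2d : ∀ s : ℝ, |s| ≤ R → HasDerivAt E2
      (∫ t in (0:ℝ)..1, 2 * (3 * (pd1 F (s, t) * pd1 (pd1 F) (s, t))
        + (F (s, t) + S) * pd1 (pd1 (pd1 F)) (s, t))) s := by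
    intro s hs
    refine hasDerivAt_param hU
      (φ := fun p => 2 * (pd1 F p ^ 2 + (F p + S) * pd1 (pd1 F) p))
      (ψ := fun p => 2 * (3 * (pd1 F p * pd1 (pd1 F) p) + (F p + S) * pd1 (pd1 (pd1 F)) p))
      ?_ ?_ ?_ (fun t _ => hmem s hs t)
    · exact continuousOn_const.mul ((hF1s.continuousOn.pow 2).add
        ((hf.continuousOn.add continuousOn_const).mul hF11s.continuousOn))
    · exact continuousOn_const.mul ((continuousOn_const.mul
        (hF1s.continuousOn.mul hF11s.continuousOn)).add
        ((hf.continuousOn.add continuousOn_const).mul hF111s.continuousOn))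
    · rintro ⟨x, y⟩ hp
      have h := (((hasDerivAt_slice1 hU hF1s hp).fun_pow 2).fun_add
        (((hasDerivAt_slice1 hU hf hp).add_const S).fun_mul
          (hasDerivAt_slice1 hU hF11s hp))).const_mul 2
      refine h.congr_deriv ?_
      push_cast
      ring
  have Econt : ContinuousOn E (Icc (-R) R) := fun s hs =>
    ((hEd s (abs_le.mpr ⟨hs.1, hs.2⟩)).continuousAt).continuousWithinAt
  have E1cont : ContinuousOn E1 (Icc (-R) R) := fun s hs =>
    ((hE1d s (abs_le.mpr ⟨hs.1, hs.2⟩)).continuousAt).continuousWithinAt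
  have E2cont : ContinuousOn E2 (Icc (-R) R) := fun s hs =>
    ((hE2d s (abs_le.mpr ⟨hs.1, hs.2⟩)).continuousAt).continuousWithinAt
  -- mean of f(s,.)+S is zero
  set m : ℝ → ℝ := fun s => ∫ t in (0:ℝ)..1, F (s, t) with hmdef
  have hmd : ∀ s : ℝ, |s| ≤ R → HasDerivAt m (∫ t in (0:ℝ)..1, pd1 F (s, t)) s := by
    intro s hs
    exact hasDerivAt_param hU hf.continuousOn hF1s.continuousOn
      (fun p hp => hasDerivAt_slice1 hU hf hp) (fun t _ => hmem s hs t)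
  have hint0 : ∀ s : ℝ, |s| ≤ R → (∫ t in (0:ℝ)..1, pd1 F (s, t)) = 0 := by
    intro s hs
    have hcongr : (∫ t in (0:ℝ)..1, pd1 F (s, t)) = ∫ t in (0:ℝ)..1, -(pd2 G (s, t)) :=
      intervalIntegral.integral_congr (fun t ht => cr1 (s, t) (hmem s hs t))
    have hftc : (∫ t in (0:ℝ)..1, pd2 G (s, t)) = G (s, 1) - G (s, 0) :=
      intervalIntegral.integral_eq_sub_of_hasDerivAt
        (fun t ht => hasDerivAt_slice2 hU hg (hmem s hs t))
        ((sliceCont _ hG2s.continuousOn s hs).intervalIntegrable 0 1)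
    have hper : G (s, 1) = G (s, 0) := by
      have := hgper s 0 hs; simpa using this
    rw [hcongr, intervalIntegral.integral_neg, hftc, hper, sub_self, neg_zero]
  have hmconst : ∀ s ∈ Icc (-R) R, m s = m (-R) := by
    apply constant_of_has_deriv_right_zero
    · exact fun s hs => ((hmd s (abs_le.mpr ⟨hs.1, hs.2⟩)).continuousAt).continuousWithinAt
    · intro x hx
      have hxR : |x| ≤ R := abs_le.mpr ⟨hx.1, le_of_lt hx.2⟩
      have h := hmd x hxR
      rw [hint0 x hxR] at h
      exact h.hasDerivWithinAt
  have hmean : ∀ s ∈ Icc (-R) R, (∫ t in (0:ℝ)..1, (F (s, t) + S)) = 0 := by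
    intro s hs
    have hsR : |s| ≤ R := abs_le.mpr ⟨hs.1, hs.2⟩
    have hint : (∫ t in (0:ℝ)..1, (F (s, t) + S)) = m s + S := by
      rw [intervalIntegral.integral_add
        ((sliceCont _ hf.continuousOn s hsR).intervalIntegrable 0 1)
        intervalIntegrable_const, intervalIntegral.integral_const]
      simp; rfl
    have h0 : m 0 = -S := by rw [hS, neg_neg]
    have hms : m s = -S := by
      rw [hmconst s hs, ← hmconst 0 ⟨by linarith, by linarith⟩, h0]
    rw [hint, hms]; ring
  -- Poincare inequality on each slice
  have poincare : ∀ s ∈ Icc (-R) R, E s ≤ ∫ t in (0:ℝ)..1, pd2 F (s, t) ^ 2 := by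
    intro s hs
    have hsR : |s| ≤ R := abs_le.mpr ⟨hs.1, hs.2⟩
    set u : ℝ → ℝ := fun t => F (s, t) + S with hudef
    have ucont : Continuous u := ((sliceCont _ hf.continuousOn s hsR)).add continuous_const
    have hu : ∀ t : ℝ, HasDerivAt u (pd2 F (s, t)) t := fun t =>
      (hasDerivAt_slice2 hU hf (hmem s hsR t)).add_const S
    have hF2cont : Continuous (fun t => pd2 F (s, t)) := sliceCont _ hF2s.continuousOn s hsR
    set c : ℝ := ∫ x in (0:ℝ)..1, |pd2 F (s, x)| with hcdef
    have hc0 : 0 ≤ c := intervalIntegral.integral_nonneg zero_le_one (fun x _ => abs_nonneg _)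
    have hbound : ∀ t ∈ Icc (0:ℝ) 1, |u t| ≤ c := by
      intro t ht
      have hrep : u t = ∫ r in (0:ℝ)..1, (u t - u r) := by
        rw [intervalIntegral.integral_sub intervalIntegrable_const
          (ucont.intervalIntegrable 0 1), hmean s hs, intervalIntegral.integral_const]
        simp
      have hdiff : ∀ r ∈ Icc (0:ℝ) 1, |u t - u r| ≤ c := by
        intro r hr
        have heq : u t - u r = ∫ x in r..t, pd2 F (s, x) :=
          (intervalIntegral.integral_eq_sub_of_hasDerivAt (fun x _ => hu x)
            (hF2cont.intervalIntegrable r t)).symm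
        rw [heq]
        rcases le_total r t with hrt | hrt
        · calc |∫ x in r..t, pd2 F (s, x)| ≤ ∫ x in r..t, |pd2 F (s, x)| :=
              intervalIntegral.abs_integral_le_integral_abs hrt
            _ ≤ c := intervalIntegral.integral_mono_interval hr.1 hrt ht.2
              (Eventually.of_forall (fun x => abs_nonneg _))
              (hF2cont.abs.intervalIntegrable 0 1)
        · rw [intervalIntegral.integral_symm, abs_neg]
          calc |∫ x in t..r, pd2 F (s, x)| ≤ ∫ x in t..r, |pd2 F (s, x)| :=
              intervalIntegral.abs_integral_le_integral_abs hrt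
            _ ≤ c := intervalIntegral.integral_mono_interval ht.1 hrt hr.2
              (Eventually.of_forall (fun x => abs_nonneg _))
              (hF2cont.abs.intervalIntegrable 0 1)
      calc |u t| = |∫ r in (0:ℝ)..1, (u t - u r)| := by rw [← hrep]
        _ ≤ ∫ r in (0:ℝ)..1, |u t - u r| :=
            intervalIntegral.abs_integral_le_integral_abs zero_le_one
        _ ≤ ∫ r in (0:ℝ)..1, c := intervalIntegral.integral_mono_on zero_le_one
            (((continuous_const.sub ucont).abs).intervalIntegrable 0 1)
            intervalIntegrable_const hdiff
        _ = c := by simp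
    have h1 : (∫ t in (0:ℝ)..1, (u t) ^ 2) ≤ ∫ t in (0:ℝ)..1, c ^ 2 := by
      apply intervalIntegral.integral_mono_on zero_le_one
        ((ucont.fun_pow 2).intervalIntegrable 0 1) intervalIntegrable_const
      intro t ht
      have := hbound t ht
      nlinarith [abs_nonneg (u t), sq_abs (u t)]
    have h2 : c ^ 2 ≤ ∫ t in (0:ℝ)..1, pd2 F (s, t) ^ 2 := by
      have hnn : 0 ≤ ∫ x in (0:ℝ)..1, (|pd2 F (s, x)| - c) ^ 2 :=
        intervalIntegral.integral_nonneg zero_le_one (fun x _ => sq_nonneg _)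
      have hexp : (∫ x in (0:ℝ)..1, (|pd2 F (s, x)| - c) ^ 2)
          = (∫ x in (0:ℝ)..1, pd2 F (s, x) ^ 2) - 2 * c * c + c ^ 2 := by
        have hptw : ∀ x : ℝ, (|pd2 F (s, x)| - c) ^ 2
            = pd2 F (s, x) ^ 2 - (2 * c) * |pd2 F (s, x)| + c ^ 2 := by
          intro x
          have : |pd2 F (s, x)| ^ 2 = pd2 F (s, x) ^ 2 := sq_abs _
          nlinarith [this]
        rw [intervalIntegral.integral_congr (fun x _ => hptw x)]
        rw [intervalIntegral.integral_add (((hF2cont.fun_pow 2).fun_sub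
          ((continuous_const.fun_mul hF2cont.abs))).intervalIntegrable 0 1)
          intervalIntegrable_const]
        rw [intervalIntegral.integral_sub ((hF2cont.fun_pow 2).intervalIntegrable 0 1)
          ((continuous_const.fun_mul hF2cont.abs).intervalIntegrable 0 1)]
        rw [intervalIntegral.integral_const_mul, intervalIntegral.integral_const]
        rw [← hcdef]
        simp
      nlinarith [hnn, hexp]
    calc E s = ∫ t in (0:ℝ)..1, (u t) ^ 2 := rfl
      _ ≤ ∫ t in (0:ℝ)..1, c ^ 2 := h1
      _ = c ^ 2 := by simp
      _ ≤ _ := h2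
  -- E2 dominates E (differential inequality)
  have hE2ge : ∀ s ∈ Icc (-R) R, E s ≤ E2 s := by
    intro s hs
    have hsR : |s| ≤ R := abs_le.mpr ⟨hs.1, hs.2⟩
    have ucont : Continuous (fun t => F (s, t) + S) :=
      (sliceCont _ hf.continuousOn s hsR).add continuous_const
    have hF2cont : Continuous (fun t => pd2 F (s, t)) := sliceCont _ hF2s.continuousOn s hsR
    have hF22cont : Continuous (fun t => pd2 (pd2 F) (s, t)) :=
      sliceCont _ hF22s.continuousOn s hsR
    have hF1cont : Continuous (fun t => pd1 F (s, t)) := sliceCont _ hF1s.continuousOn s hsR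
    have hF11cont : Continuous (fun t => pd1 (pd1 F) (s, t)) :=
      sliceCont _ hF11s.continuousOn s hsR
    have hibp : (∫ t in (0:ℝ)..1, (F (s, t) + S) * pd2 (pd2 F) (s, t))
        = (F (s, 1) + S) * pd2 F (s, 1) - (F (s, 0) + S) * pd2 F (s, 0)
          - ∫ t in (0:ℝ)..1, pd2 F (s, t) * pd2 F (s, t) :=
      intervalIntegral.integral_mul_deriv_eq_deriv_mul
        (u := fun t => F (s, t) + S) (v := fun t => pd2 F (s, t))
        (u' := fun t => pd2 F (s, t)) (v' := fun t => pd2 (pd2 F) (s, t))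
        (fun t _ => (hasDerivAt_slice2 hU hf (hmem s hsR t)).add_const S)
        (fun t _ => hasDerivAt_slice2 hU hF2s (hmem s hsR t))
        (hF2cont.intervalIntegrable 0 1) (hF22cont.intervalIntegrable 0 1)
    have hFper : F (s, 1) = F (s, 0) := by simpa using hfper s 0 hsR
    have hbdry : (F (s, 1) + S) * pd2 F (s, 1) - (F (s, 0) + S) * pd2 F (s, 0) = 0 := by
      rw [hFper, perF2 s hsR]; ring
    have hcongr : (∫ t in (0:ℝ)..1, (F (s, t) + S) * pd1 (pd1 F) (s, t))
        = ∫ t in (0:ℝ)..1, -((F (s, t) + S) * pd2 (pd2 F) (s, t)) := by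
      apply intervalIntegral.integral_congr
      intro t _
      show (F (s, t) + S) * pd1 (pd1 F) (s, t) = -((F (s, t) + S) * pd2 (pd2 F) (s, t))
      rw [laplace (s, t) (hmem s hsR t)]
      ring
    have key1 : (∫ t in (0:ℝ)..1, (F (s, t) + S) * pd1 (pd1 F) (s, t))
        = ∫ t in (0:ℝ)..1, pd2 F (s, t) ^ 2 := by
      rw [hcongr, intervalIntegral.integral_neg, hibp, hbdry]
      rw [zero_sub, neg_neg]
      apply intervalIntegral.integral_congr
      intro t _
      ring
    have hsplit : E2 s = 2 * ((∫ t in (0:ℝ)..1, pd1 F (s, t) ^ 2)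
        + (∫ t in (0:ℝ)..1, (F (s, t) + S) * pd1 (pd1 F) (s, t))) := by
      show (∫ t in (0:ℝ)..1, 2 * (pd1 F (s, t) ^ 2 + (F (s, t) + S) * pd1 (pd1 F) (s, t))) = _
      rw [intervalIntegral.integral_const_mul, intervalIntegral.integral_add
        ((hF1cont.fun_pow 2).intervalIntegrable 0 1)
        ((ucont.fun_mul hF11cont).intervalIntegrable 0 1)]
    have hnn1 : 0 ≤ ∫ t in (0:ℝ)..1, pd1 F (s, t) ^ 2 :=
      intervalIntegral.integral_nonneg zero_le_one (fun t _ => sq_nonneg _)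
    have hp := poincare s hs
    have hE0 : 0 ≤ E s := intervalIntegral.integral_nonneg zero_le_one (fun t _ => sq_nonneg _)
    rw [hsplit, key1]
    linarith
  -- weighted double integration by parts
  have huIcc : uIcc (-R) R = Icc (-R) R := uIcc_of_le hRR
  set w : ℝ → ℝ := fun s => Real.cosh R - Real.cosh s with hwdef
  have hwd : ∀ x : ℝ, HasDerivAt w (-Real.sinh x) x := by
    intro x
    simpa using (hasDerivAt_const x (Real.cosh R)).fun_sub (Real.hasDerivAt_cosh x)
  have hw0R : w R = 0 := by simp [hwdef]
  have hw0negR : w (-R) = 0 := by simp [hwdef, Real.cosh_neg]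
  have hwnn : ∀ s ∈ Icc (-R) R, 0 ≤ w s := by
    intro s hs
    have h1 : Real.cosh s ≤ Real.cosh R := by
      rw [Real.cosh_le_cosh, abs_of_pos hR]
      exact abs_le.mpr ⟨hs.1, hs.2⟩
    simp only [hwdef]
    linarith
  have wcont : Continuous w := continuous_const.sub Real.continuous_cosh
  have hEint : IntervalIntegrable E volume (-R) R :=
    ContinuousOn.intervalIntegrable (by rw [huIcc]; exact Econt)
  have hE1int : IntervalIntegrable E1 volume (-R) R :=
    ContinuousOn.intervalIntegrable (by rw [huIcc]; exact E1cont)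
  have hE2int : IntervalIntegrable E2 volume (-R) R :=
    ContinuousOn.intervalIntegrable (by rw [huIcc]; exact E2cont)
  have hE2wint : IntervalIntegrable (fun s => w s * E2 s) volume (-R) R :=
    ContinuousOn.intervalIntegrable (by rw [huIcc]; exact wcont.continuousOn.mul E2cont)
  have hEwint : IntervalIntegrable (fun s => E s * w s) volume (-R) R :=
    ContinuousOn.intervalIntegrable (by rw [huIcc]; exact Econt.mul wcont.continuousOn)
  have hcoshEint : IntervalIntegrable (fun s => Real.cosh s * E s) volume (-R) R :=
    ContinuousOn.intervalIntegrable
      (by rw [huIcc]; exact Real.continuous_cosh.continuousOn.mul Econt)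
  have hsinhE1int : IntervalIntegrable (fun s => Real.sinh s * E1 s) volume (-R) R :=
    ContinuousOn.intervalIntegrable
      (by rw [huIcc]; exact Real.continuous_sinh.continuousOn.mul E1cont)
  have hibp1 : (∫ s in (-R)..R, w s * E2 s)
      = w R * E1 R - w (-R) * E1 (-R) - ∫ s in (-R)..R, (-Real.sinh s) * E1 s :=
    intervalIntegral.integral_mul_deriv_eq_deriv_mul
      (fun x _ => hwd x)
      (fun x hx => hE1d x (abs_le.mpr ⟨(huIcc ▸ hx).1, (huIcc ▸ hx).2⟩))
      ((Real.continuous_sinh.neg).intervalIntegrable (-R) R)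
      hE2int
  have hibp2 : (∫ s in (-R)..R, Real.sinh s * E1 s)
      = Real.sinh R * E R - Real.sinh (-R) * E (-R) - ∫ s in (-R)..R, Real.cosh s * E s :=
    intervalIntegral.integral_mul_deriv_eq_deriv_mul
      (fun x _ => Real.hasDerivAt_sinh x)
      (fun x hx => hEd x (abs_le.mpr ⟨(huIcc ▸ hx).1, (huIcc ▸ hx).2⟩))
      (Real.continuous_cosh.intervalIntegrable (-R) R)
      hE1int
  have hneg : (∫ s in (-R)..R, (-Real.sinh s) * E1 s)
      = -∫ s in (-R)..R, Real.sinh s * E1 s := by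
    rw [← intervalIntegral.integral_neg]
    apply intervalIntegral.integral_congr
    intro x _
    ring
  have hnnw : 0 ≤ ∫ s in (-R)..R, (E2 s - E s) * w s :=
    intervalIntegral.integral_nonneg hRR
      (fun x hx => mul_nonneg (by linarith [hE2ge x hx]) (hwnn x hx))
  have hsplit2 : (∫ s in (-R)..R, (E2 s - E s) * w s)
      = (∫ s in (-R)..R, w s * E2 s) - ∫ s in (-R)..R, E s * w s := by
    rw [← intervalIntegral.integral_sub hE2wint hEwint]
    apply intervalIntegral.integral_congr
    intro x _
    ring
  have hEw : (∫ s in (-R)..R, E s * w s)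
      = Real.cosh R * (∫ s in (-R)..R, E s) - ∫ s in (-R)..R, Real.cosh s * E s := by
    rw [← intervalIntegral.integral_const_mul, ← intervalIntegral.integral_sub
      (hEint.const_mul (Real.cosh R)) hcoshEint]
    apply intervalIntegral.integral_congr
    intro x _
    simp only [hwdef]
    ring
  have hERnn : 0 ≤ E R := intervalIntegral.integral_nonneg zero_le_one (fun t _ => sq_nonneg _)
  have hEnegRnn : 0 ≤ E (-R) :=
    intervalIntegral.integral_nonneg zero_le_one (fun t _ => sq_nonneg _)
  have hsinhcosh : Real.sinh R ≤ Real.cosh R := by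
    have h1 := Real.cosh_sub_sinh R
    have h2 := Real.exp_pos (-R)
    linarith
  have hcoshpos : (0:ℝ) < Real.cosh R := Real.cosh_pos R
  have hkey : Real.cosh R * (∫ s in (-R)..R, E s) ≤ Real.sinh R * (E R + E (-R)) := by
    have e1 : (∫ s in (-R)..R, w s * E2 s)
        = Real.sinh R * E R - Real.sinh (-R) * E (-R) - ∫ s in (-R)..R, Real.cosh s * E s := by
      rw [hibp1, hw0R, hw0negR, hneg, hibp2]
      ring
    rw [Real.sinh_neg] at e1
    have e2 := hsplit2
    rw [e1, hEw] at e2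
    linarith [hnnw, e2.symm ▸ hnnw]
  have hfinal : (∫ s in (-R)..R, E s) ≤ E R + E (-R) := by
    have h2 : Real.sinh R * (E R + E (-R)) ≤ Real.cosh R * (E R + E (-R)) := by nlinarith
    nlinarith
  have e1 : E R = ∫ t in (0:ℝ)..1, (f R t + S) ^ 2 := rfl
  have e2 : E (-R) = ∫ t in (0:ℝ)..1, (f (-R) t + S) ^ 2 := rfl
  have hmax1 : E R ≤ max (∫ t in (0:ℝ)..1, (f R t + S) ^ 2)
      (∫ t in (0:ℝ)..1, (f (-R) t + S) ^ 2) := e1 ▸ le_max_left _ _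
  have hmax2 : E (-R) ≤ max (∫ t in (0:ℝ)..1, (f R t + S) ^ 2)
      (∫ t in (0:ℝ)..1, (f (-R) t + S) ^ 2) := e2 ▸ le_max_right _ _
  have hmaxnn : 0 ≤ max (∫ t in (0:ℝ)..1, (f R t + S) ^ 2)
      (∫ t in (0:ℝ)..1, (f (-R) t + S) ^ 2) := le_trans hERnn hmax1
  calc (∫ s in (-R)..R, ∫ t in (0:ℝ)..1, (f s t + S) ^ 2)
      = ∫ s in (-R)..R, E s := rfl
    _ ≤ E R + E (-R) := hfinal
    _ ≤ 144 * max (∫ t in (0:ℝ)..1, (f R t + S) ^ 2)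
        (∫ t in (0:ℝ)..1, (f (-R) t + S) ^ 2) := by linarith

end HarmCylAux

/-- Integrated `L²` estimate for a harmonic 1-form `η = f ds + g dt`
on the cylinder `[-R,R] × S¹` with period `P` and co-period `S̃`:
`∫_{-R}^{R}∫₀¹ (f+S̃)² ≤ 144 max{∫₀¹ (f(±R,·)+S̃)²}` and
`∫_{-R}^{R}∫₀¹ (g-P)² ≤ 144 max{∫₀¹ (g(±R,·)-P)²}`. -/
theorem harmonic_cylinder_L2_integrated_estimate
    (R : ℝ) (hR : 0 < R) (f g : ℝ → ℝ → ℝ)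
    (U : Set (ℝ × ℝ)) (hU : IsOpen U)
    (hUsub : {p : ℝ × ℝ | |p.1| ≤ R} ⊆ U)
    (hf : ContDiffOn ℝ (⊤ : ℕ∞) (fun p : ℝ × ℝ => f p.1 p.2) U)
    (hg : ContDiffOn ℝ (⊤ : ℕ∞) (fun p : ℝ × ℝ => g p.1 p.2) U)
    (hCR₁ : ∀ p ∈ U, deriv (fun s => f s p.2) p.1 = -deriv (fun t => g p.1 t) p.2)
    (hCR₂ : ∀ p ∈ U, deriv (fun t => f p.1 t) p.2 = deriv (fun s => g s p.2) p.1)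
    (hfper : ∀ s t : ℝ, |s| ≤ R → f s (t + 1) = f s t)
    (hgper : ∀ s t : ℝ, |s| ≤ R → g s (t + 1) = g s t)
    (P S : ℝ)
    (hP : P = ∫ t in (0 : ℝ)..1, g 0 t)
    (hS : S = -∫ t in (0 : ℝ)..1, f 0 t) :
    (∫ s in (-R)..R, ∫ t in (0 : ℝ)..1, (f s t + S) ^ 2) ≤
      144 * max (∫ t in (0 : ℝ)..1, (f R t + S) ^ 2)
        (∫ t in (0 : ℝ)..1, (f (-R) t + S) ^ 2) ∧
    (∫ s in (-R)..R, ∫ t in (0 : ℝ)..1, (g s t - P) ^ 2) ≤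
      144 * max (∫ t in (0 : ℝ)..1, (g R t - P) ^ 2)
        (∫ t in (0 : ℝ)..1, (g (-R) t - P) ^ 2) := by
  have hf' := hf.of_le (le_refl _)
  have hg' := hg.of_le (le_refl _)
  constructor
  · exact HarmCylAux.main_estimate R hR f g U hU hUsub hf' hg' hCR₁ hCR₂ hfper hgper S hS
  · have hnf := hf'.neg
    have hCR₁' : ∀ p ∈ U, deriv (fun s => g s p.2) p.1 = -deriv (fun t => -f p.1 t) p.2 := by
      intro p hp
      rw [deriv.fun_neg, neg_neg]
      exact (hCR₂ p hp).symm
    have hCR₂' : ∀ p ∈ U, deriv (fun t => g p.1 t) p.2 = deriv (fun s => -f s p.2) p.1 := by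
      intro p hp
      rw [deriv.fun_neg, hCR₁ p hp, neg_neg]
    have hS' : -P = -∫ t in (0 : ℝ)..1, g 0 t := by rw [hP]
    have h := HarmCylAux.main_estimate R hR g (fun s t => -f s t) U hU hUsub hg' hnf
      hCR₁' hCR₂' hgper (fun s t hs => by simp [hfper s t hs]) (-P) hS'
    simpa [sub_eq_add_neg] using h
end
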